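/- arXiv:2309.07787 — 10 statements merged into one kernel-verified Lean document; each statement's English description precedes it below -/
import Mathlib

section
/- Monotone structure of solutions to nonlinear allocation problems (Theorem 3.1, weak form). Let N ∈ ℕ, let l < u be real numbers, Ξ = [l,u], and D ∈ ℝ. For each k ∈ {0,…,N−1} let n_k, d_k : Ξ → ℝ be continuously differentiable with n_k strictly increasing, with d_k'(σ) ≠ 0 for every σ ∈ Ξ, and suppose the ratio function I_k(σ) = n_k'(σ)/d_k'(σ) is strictly negative and strictly decreasing on Ξ. If σ* ∈ Ξ^N minimizes ∑_{k=0}^{N−1} n_k(σ_k) over all σ ∈ Ξ^N satisfying ∑_{k=0}^{N−1} d_k(σ_k) = D, then for every pair of indices k₁, k₂ ∈ {0,…,N−1}: if I_{k₁}(σ) ≥ I_{k₂}(σ) for all σ ∈ Ξ, then σ*_{k₁} ≥ σ*_{k₂}. -/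
lemma sum_comp_update {N : ℕ} (f : Fin N → ℝ → ℝ) (g : Fin N → ℝ) (i : Fin N) (y : ℝ) :
    ∑ k, f k (Function.update g i y k) = ∑ k, f k (g k) - f i (g i) + f i y := by
  have h1 : (fun k => f k (Function.update g i y k))
      = Function.update (fun k => f k (g k)) i (f i y) := by
    funext k
    rcases eq_or_ne k i with rfl | h
    · simp
    · simp [Function.update_apply, h]
  rw [h1, Finset.sum_update_of_mem (Finset.mem_univ i)]
  rw [Finset.sdiff_singleton_eq_erase, ← Finset.sum_erase_add _ _ (Finset.mem_univ i)]
  ring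

/-- Monotone structure of solutions to nonlinear allocation problems
(Theorem 3.1, weak form). -/
theorem monotone_structure_allocation
    (N : ℕ) (l u D : ℝ) (hlu : l < u)
    (n d n' d' : Fin N → ℝ → ℝ)
    (hn_deriv : ∀ k, ∀ σ ∈ Set.Icc l u,
      HasDerivWithinAt (n k) (n' k σ) (Set.Icc l u) σ)
    (hd_deriv : ∀ k, ∀ σ ∈ Set.Icc l u,
      HasDerivWithinAt (d k) (d' k σ) (Set.Icc l u) σ)
    (hn'_cont : ∀ k, ContinuousOn (n' k) (Set.Icc l u))
    (hd'_cont : ∀ k, ContinuousOn (d' k) (Set.Icc l u))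
    (hn_mono : ∀ k, StrictMonoOn (n k) (Set.Icc l u))
    (hd'_ne : ∀ k, ∀ σ ∈ Set.Icc l u, d' k σ ≠ 0)
    (hI_neg : ∀ k, ∀ σ ∈ Set.Icc l u, n' k σ / d' k σ < 0)
    (hI_anti : ∀ k, StrictAntiOn (fun σ => n' k σ / d' k σ) (Set.Icc l u))
    (σs : Fin N → ℝ)
    (hfeas : ∀ k, σs k ∈ Set.Icc l u)
    (hbudget : ∑ k, d k (σs k) = D)
    (hopt : ∀ σ : Fin N → ℝ, (∀ k, σ k ∈ Set.Icc l u) →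
      (∑ k, d k (σ k) = D) → ∑ k, n k (σs k) ≤ ∑ k, n k (σ k))
    (k₁ k₂ : Fin N)
    (hI : ∀ σ ∈ Set.Icc l u, n' k₂ σ / d' k₂ σ ≤ n' k₁ σ / d' k₁ σ) :
    σs k₂ ≤ σs k₁ := by
  rcases eq_or_ne k₁ k₂ with rfl | hk
  · exact le_refl _
  by_contra hcon
  push_neg at hcon
  -- basic continuity and derivative facts
  have hcont_n : ∀ k, ContinuousOn (n k) (Set.Icc l u) :=
    fun k x hx => (hn_deriv k x hx).continuousWithinAt
  have hcont_d : ∀ k, ContinuousOn (d k) (Set.Icc l u) :=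
    fun k x hx => (hd_deriv k x hx).continuousWithinAt
  have hderivAt_n : ∀ k, ∀ x ∈ Set.Ioo l u, HasDerivAt (n k) (n' k x) x := fun k x hx =>
    (hn_deriv k x ⟨hx.1.le, hx.2.le⟩).hasDerivAt (Icc_mem_nhds hx.1 hx.2)
  have hderivAt_d : ∀ k, ∀ x ∈ Set.Ioo l u, HasDerivAt (d k) (d' k x) x := fun k x hx =>
    (hd_deriv k x ⟨hx.1.le, hx.2.le⟩).hasDerivAt (Icc_mem_nhds hx.1 hx.2)
  have hlmem : l ∈ Set.Icc l u := ⟨le_rfl, hlu.le⟩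
  have humem : u ∈ Set.Icc l u := ⟨hlu.le, le_rfl⟩
  -- d' is everywhere negative
  have hd'_neg : ∀ k, ∀ σ ∈ Set.Icc l u, d' k σ < 0 := by
    intro k
    have hsame : ∀ σ ∈ Set.Icc l u, ∀ τ ∈ Set.Icc l u, 0 < d' k σ → 0 < d' k τ := by
      intro σ hσ τ hτ hpos
      by_contra hneg
      push_neg at hneg
      have hneg' : d' k τ < 0 := lt_of_le_of_ne hneg (hd'_ne k τ hτ)
      have hsub : Set.uIcc σ τ ⊆ Set.Icc l u := Set.uIcc_subset_Icc hσ hτ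
      have h0 : (0:ℝ) ∈ Set.uIcc (d' k σ) (d' k τ) := by
        rw [Set.mem_uIcc]; right; exact ⟨hneg'.le, hpos.le⟩
      obtain ⟨ρ, hρ, hρ0⟩ := intermediate_value_uIcc ((hd'_cont k).mono hsub) h0
      exact hd'_ne k ρ (hsub hρ) hρ0
    by_contra hnotneg
    push_neg at hnotneg
    obtain ⟨σ₀, hσ₀, hσ₀'⟩ := hnotneg
    have hpos0 : 0 < d' k σ₀ := lt_of_le_of_ne hσ₀' (Ne.symm (hd'_ne k σ₀ hσ₀))
    have hallpos : ∀ τ ∈ Set.Icc l u, 0 < d' k τ := fun τ hτ => hsame σ₀ hσ₀ τ hτ hpos0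
    -- then n' < 0 everywhere, so n is strictly decreasing: contradiction
    have hn'neg : ∀ τ ∈ Set.Icc l u, n' k τ < 0 := by
      intro τ hτ
      have := hI_neg k τ hτ
      have hd := hallpos τ hτ
      by_contra hge
      push_neg at hge
      have : 0 ≤ n' k τ / d' k τ := div_nonneg hge hd.le
      linarith [hI_neg k τ hτ]
    have hanti : StrictAntiOn (n k) (Set.Icc l u) := by
      apply strictAntiOn_of_deriv_neg (convex_Icc l u) (hcont_n k)
      intro x hx
      rw [interior_Icc] at hx
      rw [(hderivAt_n k x hx).deriv]
      exact hn'neg x ⟨hx.1.le, hx.2.le⟩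
    have := hanti hlmem humem hlu
    have := hn_mono k hlmem humem hlu
    linarith
  -- d is strictly decreasing
  have hd_anti : ∀ k, StrictAntiOn (d k) (Set.Icc l u) := by
    intro k
    apply strictAntiOn_of_deriv_neg (convex_Icc l u) (hcont_d k)
    intro x hx
    rw [interior_Icc] at hx
    rw [(hderivAt_d k x hx).deriv]
    exact hd'_neg k x ⟨hx.1.le, hx.2.le⟩
  set a := σs k₁ with ha_def
  set b := σs k₂ with hb_def
  have hab : a < b := hcon
  have ha : a ∈ Set.Icc l u := hfeas k₁
  have hb : b ∈ Set.Icc l u := hfeas k₂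
  set m := (a + b) / 2 with hm_def
  have ham : a < m := by simp only [hm_def]; linarith
  have hmb : m < b := by simp only [hm_def]; linarith
  have hm : m ∈ Set.Icc l u := ⟨le_trans ha.1 ham.le, le_trans hmb.le hb.2⟩
  have hε : 0 < d k₁ a - d k₁ m := sub_pos.2 (hd_anti k₁ ha hm ham)
  have hc : 0 < d k₂ m - d k₂ b := sub_pos.2 (hd_anti k₂ hm hb hmb)
  set s := min (d k₁ a - d k₁ m) (d k₂ m - d k₂ b) / 2 with hs_def
  have hs : 0 < s := half_pos (lt_min hε hc)
  have hsε : s < d k₁ a - d k₁ m := by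
    have := min_le_left (d k₁ a - d k₁ m) (d k₂ m - d k₂ b)
    simp only [hs_def]; linarith
  have hsc : s < d k₂ m - d k₂ b := by
    have := min_le_right (d k₁ a - d k₁ m) (d k₂ m - d k₂ b)
    simp only [hs_def]; linarith
  -- find y ∈ [m, b) with d k₂ y = d k₂ b + s
  have hsub2 : Set.Icc m b ⊆ Set.Icc l u := Set.Icc_subset_Icc hm.1 hb.2
  obtain ⟨y, hy_mem, hy_eq⟩ := intermediate_value_Icc' hmb.le ((hcont_d k₂).mono hsub2)
    (Set.mem_Icc.2 ⟨by linarith, by linarith⟩ : d k₂ b + s ∈ Set.Icc (d k₂ b) (d k₂ m))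
  have hyIcc : y ∈ Set.Icc l u := hsub2 hy_mem
  have hyb : y < b := by
    rcases lt_or_eq_of_le hy_mem.2 with h | h
    · exact h
    · rw [h] at hy_eq; linarith
  -- find x ∈ (a, m] with d k₁ x = d k₁ a - s
  have hsub1 : Set.Icc a m ⊆ Set.Icc l u := Set.Icc_subset_Icc ha.1 hm.2
  obtain ⟨x, hx_mem, hx_eq⟩ := intermediate_value_Icc' ham.le ((hcont_d k₁).mono hsub1)
    (Set.mem_Icc.2 ⟨by linarith, by linarith⟩ : d k₁ a - s ∈ Set.Icc (d k₁ m) (d k₁ a))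
  have hxIcc : x ∈ Set.Icc l u := hsub1 hx_mem
  have hax : a < x := by
    rcases lt_or_eq_of_le hx_mem.1 with h | h
    · exact h
    · rw [← h] at hx_eq; linarith
  -- Cauchy MVT on [a, x]
  have hIooax : Set.Ioo a x ⊆ Set.Ioo l u := fun t ht =>
    ⟨lt_of_le_of_lt ha.1 ht.1,
     lt_of_lt_of_le (lt_trans (lt_of_lt_of_le ht.2 hx_mem.2) hmb) hb.2⟩
  have hIccax : Set.Icc a x ⊆ Set.Icc l u :=
    Set.Icc_subset_Icc ha.1 (le_trans hx_mem.2 (le_trans hmb.le hb.2))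
  obtain ⟨ξ, hξ, hξeq⟩ := exists_ratio_hasDerivAt_eq_ratio_slope (n k₁) (n' k₁) hax
    ((hcont_n k₁).mono hIccax) (fun t ht => hderivAt_n k₁ t (hIooax ht))
    (d k₁) (d' k₁) ((hcont_d k₁).mono hIccax) (fun t ht => hderivAt_d k₁ t (hIooax ht))
  have hξIoo : ξ ∈ Set.Ioo l u := hIooax hξ
  have hξIcc : ξ ∈ Set.Icc l u := ⟨hξIoo.1.le, hξIoo.2.le⟩
  -- Cauchy MVT on [y, b]
  have hIooyb : Set.Ioo y b ⊆ Set.Ioo l u := fun t ht =>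
    ⟨lt_of_le_of_lt hyIcc.1 ht.1, lt_of_lt_of_le ht.2 hb.2⟩
  have hIccyb : Set.Icc y b ⊆ Set.Icc l u := Set.Icc_subset_Icc hyIcc.1 hb.2
  obtain ⟨η, hη, hηeq⟩ := exists_ratio_hasDerivAt_eq_ratio_slope (n k₂) (n' k₂) hyb
    ((hcont_n k₂).mono hIccyb) (fun t ht => hderivAt_n k₂ t (hIooyb ht))
    (d k₂) (d' k₂) ((hcont_d k₂).mono hIccyb) (fun t ht => hderivAt_d k₂ t (hIooyb ht))
  have hηIoo : η ∈ Set.Ioo l u := hIooyb hη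
  have hηIcc : η ∈ Set.Icc l u := ⟨hηIoo.1.le, hηIoo.2.le⟩
  -- express objective increments via the ratio functions
  have hval1 : n k₁ x - n k₁ a = (-s) * (n' k₁ ξ / d' k₁ ξ) := by
    have h := (eq_div_iff (hd'_ne k₁ ξ hξIcc)).2 hξeq.symm
    rw [h, hx_eq]; ring
  have hval2 : n k₂ b - n k₂ y = (-s) * (n' k₂ η / d' k₂ η) := by
    have h := (eq_div_iff (hd'_ne k₂ η hηIcc)).2 hηeq.symm
    rw [h, hy_eq]; ring
  -- key comparison
  have hξη : ξ < η :=
    lt_trans (lt_of_lt_of_le hξ.2 (le_trans hx_mem.2 hy_mem.1)) hη.1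
  have hlt : n' k₁ η / d' k₁ η < n' k₁ ξ / d' k₁ ξ := hI_anti k₁ hξIcc hηIcc hξη
  have hle : n' k₂ η / d' k₂ η ≤ n' k₁ η / d' k₁ η := hI η hηIcc
  have key : n k₁ x - n k₁ a < n k₂ b - n k₂ y := by
    rw [hval1, hval2]
    have h1 : n' k₂ η / d' k₂ η < n' k₁ ξ / d' k₁ ξ := lt_of_le_of_lt hle hlt
    nlinarith [mul_pos hs (sub_pos.2 h1)]
  -- construct the competing feasible point
  set σ' := Function.update (Function.update σs k₁ x) k₂ y with hσ'_def
  have hupd : Function.update σs k₁ x k₂ = b := Function.update_of_ne (Ne.symm hk) _ _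
  have hsum_d : ∑ k, d k (σ' k) = ∑ k, d k (σs k) - d k₁ a - d k₂ b + d k₁ x + d k₂ y := by
    rw [hσ'_def, sum_comp_update, sum_comp_update, hupd]
    ring
  have hsum_n : ∑ k, n k (σ' k) = ∑ k, n k (σs k) - n k₁ a - n k₂ b + n k₁ x + n k₂ y := by
    rw [hσ'_def, sum_comp_update, sum_comp_update, hupd]
    ring
  have hfeas' : ∀ k, σ' k ∈ Set.Icc l u := by
    intro k
    rcases eq_or_ne k k₂ with rfl | h2
    · rw [hσ'_def, Function.update_self]; exact hyIcc
    · rw [hσ'_def, Function.update_of_ne h2]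
      rcases eq_or_ne k k₁ with rfl | h1
      · rw [Function.update_self]; exact hxIcc
      · rw [Function.update_of_ne h1]; exact hfeas k
  have hbudget' : ∑ k, d k (σ' k) = D := by
    rw [hsum_d, hx_eq, hy_eq]
    linarith [hbudget]
  have := hopt σ' hfeas' hbudget'
  rw [hsum_n] at this
  linarith
end

section
/- Strict monotone structure of solutions to nonlinear allocation problems (Theorem 3.1, strict form). Let N ∈ ℕ, let l < u be real numbers, Ξ = [l,u], and D ∈ ℝ. For each k ∈ {0,…,N−1} let n_k, d_k : Ξ → ℝ be continuously differentiable with n_k strictly increasing, with d_k'(σ) ≠ 0 for every σ ∈ Ξ, and suppose the ratio function I_k(σ) = n_k'(σ)/d_k'(σ) is strictly negative and strictly decreasing on Ξ. Let σ* ∈ Ξ^N minimize ∑_{k=0}^{N−1} n_k(σ_k) over all σ ∈ Ξ^N satisfying ∑_{k=0}^{N−1} d_k(σ_k) = D. Then for every pair of indices k₁, k₂ ∈ {0,…,N−1}: if I_{k₁}(σ) > I_{k₂}(σ) for all σ in the open interval (l,u) and both σ*_{k₁} ∈ (l,u) and σ*_{k₂} ∈ (l,u), then σ*_{k₁} > σ*_{k₂}.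 -/
open Set Finset in
/-- Strict monotone structure of solutions to nonlinear allocation problems
(Theorem 3.1, strict form). -/
theorem strict_monotone_structure_allocation
    (N : ℕ) (l u D : ℝ) (hlu : l < u)
    (n d n' d' : Fin N → ℝ → ℝ)
    (hn_deriv : ∀ k, ∀ σ ∈ Set.Icc l u,
      HasDerivWithinAt (n k) (n' k σ) (Set.Icc l u) σ)
    (hd_deriv : ∀ k, ∀ σ ∈ Set.Icc l u,
      HasDerivWithinAt (d k) (d' k σ) (Set.Icc l u) σ)
    (hn'_cont : ∀ k, ContinuousOn (n' k) (Set.Icc l u))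
    (hd'_cont : ∀ k, ContinuousOn (d' k) (Set.Icc l u))
    (hn_mono : ∀ k, StrictMonoOn (n k) (Set.Icc l u))
    (hd'_ne : ∀ k, ∀ σ ∈ Set.Icc l u, d' k σ ≠ 0)
    (hI_neg : ∀ k, ∀ σ ∈ Set.Icc l u, n' k σ / d' k σ < 0)
    (hI_anti : ∀ k, StrictAntiOn (fun σ => n' k σ / d' k σ) (Set.Icc l u))
    (σs : Fin N → ℝ)
    (hfeas : ∀ k, σs k ∈ Set.Icc l u)
    (hbudget : ∑ k, d k (σs k) = D)
    (hopt : ∀ σ : Fin N → ℝ, (∀ k, σ k ∈ Set.Icc l u) →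
      (∑ k, d k (σ k) = D) → ∑ k, n k (σs k) ≤ ∑ k, n k (σ k))
    (k₁ k₂ : Fin N)
    (hI : ∀ σ ∈ Set.Ioo l u, n' k₂ σ / d' k₂ σ < n' k₁ σ / d' k₁ σ)
    (hk₁ : σs k₁ ∈ Set.Ioo l u) (hk₂ : σs k₂ ∈ Set.Ioo l u) :
    σs k₂ < σs k₁ := by
  by_contra hcon
  push_neg at hcon
  obtain ⟨hla, hau⟩ := hk₁
  obtain ⟨hlb, hbu⟩ := hk₂
  have hk12 : k₁ ≠ k₂ := by
    rintro rfl
    exact absurd (hI (σs k₁) ⟨hla, hau⟩) (lt_irrefl _)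
  -- continuity of n, d on Icc
  have hd_cont : ∀ k, ContinuousOn (d k) (Set.Icc l u) :=
    fun k x hx => (hd_deriv k x hx).continuousWithinAt
  have hn_cont : ∀ k, ContinuousOn (n k) (Set.Icc l u) :=
    fun k x hx => (hn_deriv k x hx).continuousWithinAt
  -- d' is everywhere negative
  have hd'_neg : ∀ k, ∀ σ ∈ Set.Icc l u, d' k σ < 0 := by
    intro k
    by_contra hpos
    push_neg at hpos
    obtain ⟨σ₀, hσ₀, h0⟩ := hpos
    have h0' : 0 < d' k σ₀ := lt_of_le_of_ne h0 (Ne.symm (hd'_ne k σ₀ hσ₀))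
    -- then d' k > 0 everywhere on Icc
    have hall : ∀ σ ∈ Set.Icc l u, 0 < d' k σ := by
      intro σ hσ
      rcases lt_or_ge 0 (d' k σ) with h | h
      · exact h
      have hneg : d' k σ < 0 := lt_of_le_of_ne h (hd'_ne k σ hσ)
      have hsub : Set.uIcc σ σ₀ ⊆ Set.Icc l u := Set.uIcc_subset_Icc hσ hσ₀
      have hiv := intermediate_value_uIcc ((hd'_cont k).mono hsub)
      have h0mem : (0:ℝ) ∈ Set.uIcc (d' k σ) (d' k σ₀) := by
        rw [Set.mem_uIcc]
        left
        exact ⟨le_of_lt hneg, le_of_lt h0'⟩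
      obtain ⟨z, hz, hz0⟩ := hiv h0mem
      exact absurd hz0 (hd'_ne k z (hsub hz))
    -- then n' k < 0 everywhere, so n k is strictly antitone: contradiction
    have hn'_neg : ∀ σ ∈ Set.Icc l u, n' k σ < 0 := by
      intro σ hσ
      have := hI_neg k σ hσ
      have hd := hall σ hσ
      have heq : n' k σ = (n' k σ / d' k σ) * d' k σ :=
        (div_mul_cancel₀ _ (hd'_ne k σ hσ)).symm
      rw [heq]
      exact mul_neg_of_neg_of_pos this hd
    have hanti : StrictAntiOn (n k) (Set.Icc l u) := by
      apply strictAntiOn_of_deriv_neg (convex_Icc l u) (hn_cont k)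
      intro x hx
      rw [interior_Icc] at hx
      have hx' : x ∈ Set.Icc l u := Set.Ioo_subset_Icc_self hx
      rw [((hn_deriv k x hx').hasDerivAt (Icc_mem_nhds hx.1 hx.2)).deriv]
      exact hn'_neg x hx'
    have h1 := hn_mono k ⟨le_refl l, le_of_lt hlu⟩ ⟨le_of_lt hlu, le_refl u⟩ hlu
    have h2 := hanti ⟨le_refl l, le_of_lt hlu⟩ ⟨le_of_lt hlu, le_refl u⟩ hlu
    linarith
  -- d is strictly antitone
  have hd_anti : ∀ k, StrictAntiOn (d k) (Set.Icc l u) := by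
    intro k
    apply strictAntiOn_of_deriv_neg (convex_Icc l u) (hd_cont k)
    intro x hx
    rw [interior_Icc] at hx
    have hx' : x ∈ Set.Icc l u := Set.Ioo_subset_Icc_self hx
    rw [((hd_deriv k x hx').hasDerivAt (Icc_mem_nhds hx.1 hx.2)).deriv]
    exact hd'_neg k x hx'
  -- the key ε-claim
  obtain ⟨ε, hε0, haε, hbε, hst⟩ :
      ∃ ε : ℝ, 0 < ε ∧ σs k₁ + ε < u ∧ l < σs k₂ - ε ∧
        ∀ s t : ℝ, s ∈ Set.Icc (σs k₂ - ε) (σs k₂) → t ∈ Set.Icc (σs k₁) (σs k₁ + ε) →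
          n' k₂ s / d' k₂ s < n' k₁ t / d' k₁ t := by
    rcases eq_or_lt_of_le hcon with heq | hlt
    · -- equal case: use continuity
      have hIa := hI (σs k₁) ⟨hla, hau⟩
      have hc1 : ContinuousWithinAt (fun σ => n' k₁ σ / d' k₁ σ) (Set.Icc l u) (σs k₁) :=
        ((hn'_cont k₁).div (hd'_cont k₁) (hd'_ne k₁)) (σs k₁) (hfeas k₁)
      have hc2 : ContinuousWithinAt (fun σ => n' k₂ σ / d' k₂ σ) (Set.Icc l u) (σs k₁) :=
        ((hn'_cont k₂).div (hd'_cont k₂) (hd'_ne k₂)) (σs k₁) (hfeas k₁)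
      rw [Metric.continuousWithinAt_iff] at hc1 hc2
      set a := σs k₁ with ha
      set g := (n' k₁ a / d' k₁ a - n' k₂ a / d' k₂ a) / 2 with hg
      have hgpos : 0 < g := by
        rw [hg]; linarith
      obtain ⟨δ₁, hδ₁, H₁⟩ := hc1 g hgpos
      obtain ⟨δ₂, hδ₂, H₂⟩ := hc2 g hgpos
      refine ⟨min (min (δ₁ / 2) (δ₂ / 2)) (min ((u - a) / 2) ((a - l) / 2)), ?_, ?_, ?_, ?_⟩
      · have h1 : 0 < u - a := by linarith
        have h2 : 0 < a - l := by linarith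
        positivity
      · linarith [min_le_right (min (δ₁/2) (δ₂/2)) (min ((u-a)/2) ((a-l)/2)),
          min_le_left ((u-a)/2) ((a-l)/2)]
      · rw [← heq]
        have h1 := min_le_right (min (δ₁/2) (δ₂/2)) (min ((u-a)/2) ((a-l)/2))
        have h2 := min_le_right ((u-a)/2) ((a-l)/2)
        linarith
      · intro s t hs ht
        rw [← heq] at hs
        set ε := min (min (δ₁ / 2) (δ₂ / 2)) (min ((u - a) / 2) ((a - l) / 2)) with hεdef
        have hε1 : ε ≤ δ₁ / 2 :=
          le_trans (min_le_left _ _) (min_le_left _ _)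
        have hε2 : ε ≤ δ₂ / 2 :=
          le_trans (min_le_left _ _) (min_le_right _ _)
        have hε3 : ε ≤ (u - a) / 2 :=
          le_trans (min_le_right _ _) (min_le_left _ _)
        have hε4 : ε ≤ (a - l) / 2 :=
          le_trans (min_le_right _ _) (min_le_right _ _)
        have htmem : t ∈ Set.Icc l u := ⟨by linarith [ht.1], by linarith [ht.2]⟩
        have hsmem : s ∈ Set.Icc l u := ⟨by linarith [hs.1], by linarith [hs.2]⟩
        have hdt : dist t a < δ₁ := by
          rw [Real.dist_eq, abs_lt]
          constructor <;> [linarith [ht.1]; linarith [ht.2]]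
        have hds : dist s a < δ₂ := by
          rw [Real.dist_eq, abs_lt]
          constructor <;> [linarith [hs.1]; linarith [hs.2]]
        have hH1 := H₁ htmem hdt
        have hH2 := H₂ hsmem hds
        rw [Real.dist_eq, abs_lt] at hH1 hH2
        have := hH1.1
        have := hH2.2
        rw [hg] at *
        linarith [hH1.1, hH2.2]
    · -- strict case a < b
      refine ⟨min ((σs k₂ - σs k₁) / 2) ((u - σs k₁) / 2), ?_, ?_, ?_, ?_⟩
      · have h1 : 0 < σs k₂ - σs k₁ := by linarith
        have h2 : 0 < u - σs k₁ := by linarith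
        positivity
      · linarith [min_le_right ((σs k₂ - σs k₁)/2) ((u - σs k₁)/2)]
      · linarith [min_le_left ((σs k₂ - σs k₁)/2) ((u - σs k₁)/2)]
      · intro s t hs ht
        have hm1 := min_le_left ((σs k₂ - σs k₁)/2) ((u - σs k₁)/2)
        have hm2 := min_le_right ((σs k₂ - σs k₁)/2) ((u - σs k₁)/2)
        have htmem : t ∈ Set.Icc l u := ⟨by linarith [ht.1], by linarith [ht.2]⟩
        have hsmem : s ∈ Set.Icc l u := ⟨by linarith [hs.1], by linarith [hs.2]⟩
        have htu : t < u := by linarith [ht.2]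
        have hlt' : l < t := by linarith [ht.1]
        have h1 : n' k₂ t / d' k₂ t < n' k₁ t / d' k₁ t := hI t ⟨hlt', htu⟩
        have hts : t ≤ s := by linarith [ht.2, hs.1]
        rcases eq_or_lt_of_le hts with rfl | hts'
        · exact h1
        · have h2 := hI_anti k₂ htmem hsmem hts'
          simp only at h2
          linarith
  -- set up the perturbation
  have haεu : σs k₁ + ε ≤ u := le_of_lt haε
  have hbεl : l ≤ σs k₂ - ε := le_of_lt hbε
  have hamem := hfeas k₁
  have hbmem := hfeas k₂
  have hbεmem : σs k₂ - ε ∈ Set.Icc l u := ⟨hbεl, by linarith⟩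
  have hΔ₀ : 0 < d k₂ (σs k₂ - ε) - d k₂ (σs k₂) :=
    sub_pos.2 (hd_anti k₂ hbεmem hbmem (by linarith))
  set Δ₀ := d k₂ (σs k₂ - ε) - d k₂ (σs k₂) with hΔ₀def
  -- choose x close to σs k₁
  have hcd : ContinuousWithinAt (d k₁) (Set.Icc l u) (σs k₁) := hd_cont k₁ (σs k₁) hamem
  rw [Metric.continuousWithinAt_iff] at hcd
  obtain ⟨δ, hδ0, Hδ⟩ := hcd Δ₀ hΔ₀
  set η := min ε (δ / 2) with hηdef
  have hη0 : 0 < η := lt_min hε0 (by linarith)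
  have hηε : η ≤ ε := min_le_left _ _
  have hηδ : η ≤ δ / 2 := min_le_right _ _
  set x := σs k₁ + η with hxdef
  have hxmem : x ∈ Set.Icc l u := ⟨by simp only [hxdef]; linarith, by simp only [hxdef]; linarith⟩
  have hax : σs k₁ < x := by simp only [hxdef]; linarith
  have hΔpos : 0 < d k₁ (σs k₁) - d k₁ x := sub_pos.2 (hd_anti k₁ hamem hxmem hax)
  have hΔlt : d k₁ (σs k₁) - d k₁ x < Δ₀ := by
    have : dist x (σs k₁) < δ := by
      rw [Real.dist_eq, abs_lt]
      constructor <;> simp only [hxdef] <;> [linarith; linarith]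
    have := Hδ hxmem this
    rw [Real.dist_eq, abs_lt] at this
    linarith [this.1]
  set Δ := d k₁ (σs k₁) - d k₁ x with hΔdef
  -- find y by IVT
  have hbb : σs k₂ - ε ≤ σs k₂ := by linarith
  have hivt := intermediate_value_Ioo' hbb
    ((hd_cont k₂).mono (Set.Icc_subset_Icc hbεl (le_of_lt hbu)))
  have hvmem : d k₂ (σs k₂) + Δ ∈ Set.Ioo (d k₂ (σs k₂)) (d k₂ (σs k₂ - ε)) := by
    constructor
    · linarith
    · simp only [hΔ₀def] at hΔlt ⊢; linarith
  obtain ⟨y, hy, hdy⟩ := hivt hvmem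
  have hymem : y ∈ Set.Icc l u := ⟨by linarith [hy.1], by linarith [hy.2]⟩
  have hyb : y < σs k₂ := hy.2
  -- Cauchy MVT for k₁ on [σs k₁, x]
  obtain ⟨c, hc, hceq⟩ := exists_ratio_hasDerivAt_eq_ratio_slope (n k₁) (n' k₁) hax
    ((hn_cont k₁).mono (Set.Icc_subset_Icc hamem.1 hxmem.2))
    (fun z hz => (hn_deriv k₁ z ⟨by linarith [hz.1, hamem.1], by linarith [hz.2, hxmem.2]⟩).hasDerivAt
      (Icc_mem_nhds (by linarith [hz.1]) (by linarith [hz.2, hxmem.2, hax]; )))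
    (d k₁) (d' k₁)
    ((hd_cont k₁).mono (Set.Icc_subset_Icc hamem.1 hxmem.2))
    (fun z hz => (hd_deriv k₁ z ⟨by linarith [hz.1, hamem.1], by linarith [hz.2, hxmem.2]⟩).hasDerivAt
      (Icc_mem_nhds (by linarith [hz.1]) (by linarith [hz.2, hxmem.2])))
  have hcmem : c ∈ Set.Icc l u :=
    ⟨by linarith [hc.1, hamem.1], by linarith [hc.2, hxmem.2]⟩
  have hc_in : c ∈ Set.Icc (σs k₁) (σs k₁ + ε) := by
    refine ⟨le_of_lt hc.1, ?_⟩
    have : x ≤ σs k₁ + ε := by simp only [hxdef]; linarith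
    linarith [hc.2]
  have hdc1 : d' k₁ c ≠ 0 := hd'_ne k₁ c hcmem
  have e1 : n k₁ x - n k₁ (σs k₁) = (d k₁ x - d k₁ (σs k₁)) * (n' k₁ c / d' k₁ c) := by
    rw [mul_div_assoc', eq_div_iff hdc1]
    linarith [hceq]
  -- Cauchy MVT for k₂ on [y, σs k₂]
  obtain ⟨c', hc', hceq'⟩ := exists_ratio_hasDerivAt_eq_ratio_slope (n k₂) (n' k₂) hyb
    ((hn_cont k₂).mono (Set.Icc_subset_Icc hymem.1 hbmem.2))
    (fun z hz => (hn_deriv k₂ z ⟨by linarith [hz.1, hymem.1], by linarith [hz.2]⟩).hasDerivAt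
      (Icc_mem_nhds (by linarith [hz.1, hymem.1, hbε, hy.1]) (by linarith [hz.2])))
    (d k₂) (d' k₂)
    ((hd_cont k₂).mono (Set.Icc_subset_Icc hymem.1 hbmem.2))
    (fun z hz => (hd_deriv k₂ z ⟨by linarith [hz.1, hymem.1], by linarith [hz.2]⟩).hasDerivAt
      (Icc_mem_nhds (by linarith [hz.1, hymem.1, hbε, hy.1]) (by linarith [hz.2])))
  have hc'mem : c' ∈ Set.Icc l u :=
    ⟨by linarith [hc'.1, hymem.1], by linarith [hc'.2]⟩
  have hc'_in : c' ∈ Set.Icc (σs k₂ - ε) (σs k₂) :=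
    ⟨by linarith [hc'.1, hy.1], le_of_lt hc'.2⟩
  have hdc2 : d' k₂ c' ≠ 0 := hd'_ne k₂ c' hc'mem
  have e2 : n k₂ (σs k₂) - n k₂ y = (d k₂ (σs k₂) - d k₂ y) * (n' k₂ c' / d' k₂ c') := by
    rw [mul_div_assoc', eq_div_iff hdc2]
    linarith [hceq']
  -- objective strictly decreases
  have key : n' k₂ c' / d' k₂ c' < n' k₁ c / d' k₁ c := hst c' c hc'_in hc_in
  have hprod : Δ * (n' k₂ c' / d' k₂ c') < Δ * (n' k₁ c / d' k₁ c) :=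
    mul_lt_mul_of_pos_left key hΔpos
  have e1' : n k₁ x - n k₁ (σs k₁) = -(Δ * (n' k₁ c / d' k₁ c)) := by
    rw [e1, hΔdef]; ring
  have e2' : n k₂ y - n k₂ (σs k₂) = Δ * (n' k₂ c' / d' k₂ c') := by
    have hd2 : d k₂ (σs k₂) - d k₂ y = -Δ := by rw [hdy]; ring
    rw [hd2] at e2
    linarith [e2]
  have hobj : n k₁ x + n k₂ y < n k₁ (σs k₁) + n k₂ (σs k₂) := by
    linarith [e1', e2', hprod]
  -- sum machinery
  have hrw : ∀ (g : Fin N → ℝ → ℝ) (h : Fin N → ℝ) (j : Fin N) (v : ℝ),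
      (fun k => g k (Function.update h j v k)) = Function.update (fun k => g k (h k)) j (g j v) := by
    intro g h j v
    funext k
    rcases eq_or_ne k j with rfl | hkj
    · simp
    · simp [Function.update_of_ne hkj]
  have hk1mem : k₁ ∈ Finset.univ \ ({k₂} : Finset (Fin N)) :=
    Finset.mem_sdiff.mpr ⟨Finset.mem_univ _, by simp [hk12]⟩
  have hsum : ∀ g : Fin N → ℝ → ℝ, ∀ v w : ℝ,
      ∑ k, g k (Function.update (Function.update σs k₁ v) k₂ w k)
        = g k₂ w + (g k₁ v + ∑ k ∈ (Finset.univ \ {k₂}) \ {k₁}, g k (σs k)) := by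
    intro g v w
    rw [Finset.sum_congr rfl (fun k _ => congrFun (hrw g (Function.update σs k₁ v) k₂ w) k)]
    rw [Finset.sum_update_of_mem (Finset.mem_univ k₂)]
    congr 1
    rw [Finset.sum_congr rfl (fun k _ => congrFun (hrw g σs k₁ v) k)]
    rw [Finset.sum_update_of_mem hk1mem]
  have hbase : ∀ g : Fin N → ℝ → ℝ,
      ∑ k, g k (σs k)
        = g k₂ (σs k₂) + (g k₁ (σs k₁) + ∑ k ∈ (Finset.univ \ {k₂}) \ {k₁}, g k (σs k)) := by
    intro g
    have := hsum g (σs k₁) (σs k₂)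
    simpa [Function.update_eq_self] using this
  -- feasibility and budget of the perturbed point
  have feas' : ∀ k, Function.update (Function.update σs k₁ x) k₂ y k ∈ Set.Icc l u := by
    intro k
    rcases eq_or_ne k k₂ with rfl | h2
    · simpa using hymem
    · rw [Function.update_of_ne h2]
      rcases eq_or_ne k k₁ with rfl | h1
      · simpa using hxmem
      · rw [Function.update_of_ne h1]; exact hfeas k
  have hbudget2 := hbudget
  rw [hbase d] at hbudget2
  have budget' : ∑ k, d k (Function.update (Function.update σs k₁ x) k₂ y k) = D := by
    rw [hsum d x y]
    have := hΔdef
    linarith [hdy]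
  have hle := hopt _ feas' budget'
  rw [hbase n, hsum n x y] at hle
  linarith [hobj]
end

section
/- Ordering property of optimal inexactness schedules. Consider the master problem under Assumption B. If δ* is an optimal solution of the master problem, then for every pair of indices k₁, k₂ ∈ {0,…,N−1}: b_{k₁}/a_{k₁} ≥ b_{k₂}/a_{k₂} implies δ*_{k₁} ≥ δ*_{k₂}. -/
/-!
Suppose `δs k₁ < δs k₂` although `b k₁ / a k₁ ≥ b k₂ / a k₂`. Raise `δs k₁` to `s` and lower
`δs k₂` to `t`, with `δs k₁ < s ≤ t < δs k₂` chosen by the intermediate value theorem so that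
the two changes of the budget cancel. Since `h'` is strictly increasing, the mean value theorem
makes the chord of `h` over `[δs k₁, s]` strictly steeper than the one over `[t, δs k₂]`, so the
same budget is bought back more cheaply at `k₁`: the new schedule is feasible and strictly
cheaper, contradicting optimality.
-/

open Set Function

theorem Fintype.sum_apply_update {ι α M : Type*} [Fintype ι] [DecidableEq ι] [AddCommGroup M]
    (F : ι → α → M) (x : ι → α) (i : ι) (u : α) :
    ∑ k, F k (update x i u k) = ∑ k, F k (x k) + (F i u - F i (x i)) := by
  rw [Fintype.sum_eq_add_sum_compl i, Fintype.sum_eq_add_sum_compl i (fun k => F k (x k)),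
    update_self]
  have hrest : ∑ k ∈ {i}ᶜ, F k (update x i u k) = ∑ k ∈ {i}ᶜ, F k (x k) :=
    Finset.sum_congr rfl fun k hk => by
      rw [update_of_ne (Finset.mem_compl.mp hk ∘ Finset.mem_singleton.mpr)]
  rw [hrest]
  abel

theorem slope_lt_slope_of_strictMonoOn_deriv {f f' : ℝ → ℝ} {x₁ y₁ x₂ y₂ : ℝ}
    (hf : ContinuousOn f (Icc x₁ y₂)) (hf' : ∀ x ∈ Ioo x₁ y₂, HasDerivAt f (f' x) x)
    (hmono : StrictMonoOn f' (Ioo x₁ y₂)) (h₁ : x₁ < y₁) (h₁₂ : y₁ ≤ x₂) (h₂ : x₂ < y₂) :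
    slope f x₁ y₁ < slope f x₂ y₂ := by
  obtain ⟨ξ₁, hξ₁, hslope₁⟩ := exists_hasDerivAt_eq_slope f f' h₁
    (hf.mono (Icc_subset_Icc le_rfl (by linarith)))
    fun x hx => hf' x ⟨hx.1, by linarith [hx.2]⟩
  obtain ⟨ξ₂, hξ₂, hslope₂⟩ := exists_hasDerivAt_eq_slope f f' h₂
    (hf.mono (Icc_subset_Icc (by linarith) le_rfl))
    fun x hx => hf' x ⟨by linarith [hx.1], hx.2⟩
  rw [slope_def_field, slope_def_field, ← hslope₁, ← hslope₂]
  exact hmono ⟨hξ₁.1, by linarith [hξ₁.2]⟩ ⟨by linarith [hξ₂.1], hξ₂.2⟩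
    (by linarith [hξ₁.2, hξ₂.1])

theorem exists_balanced_exchange {f : ℝ → ℝ} {x y b₁ b₂ : ℝ} (hxy : x < y)
    (hf : ContinuousOn f (Icc x y)) (hanti : StrictAntiOn f (Icc x y))
    (hb₁ : 0 < b₁) (hb₂ : 0 < b₂) :
    ∃ s t, x < s ∧ s ≤ t ∧ t < y ∧ b₁ * (f x - f s) = b₂ * (f t - f y) := by
  obtain ⟨c, hxc, hcy⟩ := exists_between hxy
  have hc : c ∈ Icc x y := ⟨hxc.le, hcy.le⟩
  have hfxc : f c < f x := hanti (left_mem_Icc.mpr hxy.le) hc hxc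
  have hfcy : f y < f c := hanti hc (right_mem_Icc.mpr hxy.le) hcy
  -- Exchange a budget amount `ε` small enough that both new points stay on their side of `c`.
  set ε := min (b₁ * (f x - f c)) (b₂ * (f c - f y))
  have hε : 0 < ε := lt_min (by nlinarith) (by nlinarith)
  have hε₁ : ε / b₁ ≤ f x - f c := (div_le_iff₀' hb₁).mpr (min_le_left _ _)
  have hε₂ : ε / b₂ ≤ f c - f y := (div_le_iff₀' hb₂).mpr (min_le_right _ _)
  have hε₁pos : 0 < ε / b₁ := div_pos hε hb₁
  have hε₂pos : 0 < ε / b₂ := div_pos hε hb₂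
  obtain ⟨s, hs, hfs⟩ := intermediate_value_Icc' hxc.le (hf.mono (Icc_subset_Icc le_rfl hcy.le))
    (show f x - ε / b₁ ∈ Icc (f c) (f x) from ⟨by linarith, by linarith⟩)
  obtain ⟨t, ht, hft⟩ := intermediate_value_Icc' hcy.le (hf.mono (Icc_subset_Icc hxc.le le_rfl))
    (show f y + ε / b₂ ∈ Icc (f y) (f c) from ⟨by linarith, by linarith⟩)
  have hxs : x < s := lt_of_le_of_ne hs.1 fun hxs => by subst hxs; linarith
  have hty : t < y := lt_of_le_of_ne ht.2 fun hty => by subst hty; linarith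
  refine ⟨s, t, hxs, hs.2.trans ht.1, hty, ?_⟩
  rw [hfs, hft]
  field_simp
  ring

theorem exchange_cost_lt {f : ℝ → ℝ} {a₁ a₂ b₁ b₂ x s t y : ℝ}
    (ha₁ : 0 < a₁) (ha₂ : 0 < a₂) (hb₁ : 0 < b₁) (hab : b₂ / a₂ ≤ b₁ / a₁)
    (hxs : x < s) (hty : t < y) (hfty : f y < f t)
    (hslope : slope f x s < slope f t y) (hbal : b₁ * (f x - f s) = b₂ * (f t - f y)) :
    a₁ * (s - x) < a₂ * (y - t) := by
  rw [slope_def_field, slope_def_field] at hslope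
  set σ₁ := (f s - f x) / (s - x)
  set σ₂ := (f y - f t) / (y - t)
  have hσ₂ : σ₂ < 0 := div_neg_of_neg_of_pos (by linarith) (by linarith)
  have hx : f x - f s = -σ₁ * (s - x) := by
    simp only [σ₁]; field_simp [(sub_pos.mpr hxs).ne']; ring
  have ht : f t - f y = -σ₂ * (y - t) := by
    simp only [σ₂]; field_simp [(sub_pos.mpr hty).ne']; ring
  have hab' : a₁ * b₂ ≤ a₂ * b₁ := by rw [div_le_div_iff₀ ha₂ ha₁] at hab; linarith
  have hq : 0 < y - t := by linarith
  have key : (b₁ * -σ₁) * (a₁ * (s - x)) < (b₁ * -σ₁) * (a₂ * (y - t)) :=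
    calc (b₁ * -σ₁) * (a₁ * (s - x))
        = (a₁ * b₂) * (-σ₂ * (y - t)) := by linear_combination a₁ * hbal - a₁ * b₁ * hx + a₁ * b₂ * ht
      _ ≤ (a₂ * b₁) * (-σ₂ * (y - t)) := by gcongr; nlinarith
      _ < (a₂ * b₁) * (-σ₁ * (y - t)) := by gcongr
      _ = (b₁ * -σ₁) * (a₂ * (y - t)) := by ring
  exact lt_of_mul_lt_mul_left key (by nlinarith)

theorem ordering_optimal_schedule_general
    (N : ℕ) (δbar m M : ℝ)
    (a b : Fin N → ℝ) (ha : ∀ k, 0 < a k) (hb : ∀ k, 0 < b k)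
    (h h' : ℝ → ℝ)
    (h_deriv : ∀ σ ∈ Set.Icc (m * δbar) (M * δbar),
      HasDerivWithinAt h (h' σ) (Set.Icc (m * δbar) (M * δbar)) σ)
    (h_anti : StrictAntiOn h (Set.Icc (m * δbar) (M * δbar)))
    (h'_mono : StrictMonoOn h' (Set.Ioo (m * δbar) (M * δbar)))
    (δs : Fin N → ℝ)
    (hfeas : ∀ k, δs k ∈ Set.Icc (m * δbar) (M * δbar))
    (hbudget : ∑ k, b k * h (δs k) = (∑ k, b k) * h δbar)
    (hopt : ∀ δ : Fin N → ℝ, (∀ k, δ k ∈ Set.Icc (m * δbar) (M * δbar)) →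
      (∑ k, b k * h (δ k) = (∑ k, b k) * h δbar) →
      ∑ k, a k * δs k ≤ ∑ k, a k * δ k)
    (k₁ k₂ : Fin N)
    (hν : b k₂ / a k₂ ≤ b k₁ / a k₁) :
    δs k₂ ≤ δs k₁ := by
  by_contra! hlt
  have hk : k₁ ≠ k₂ := fun hk => hlt.ne (congrArg δs hk)
  have hsub : Icc (δs k₁) (δs k₂) ⊆ Icc (m * δbar) (M * δbar) :=
    Icc_subset_Icc (hfeas k₁).1 (hfeas k₂).2
  have hcont : ContinuousOn h (Icc (m * δbar) (M * δbar)) :=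
    fun x hx => (h_deriv x hx).continuousWithinAt
  obtain ⟨s, t, hs, hst, ht, hbal⟩ := exists_balanced_exchange hlt (hcont.mono hsub)
    (h_anti.mono hsub) (hb k₁) (hb k₂)
  have hsubIoo : Ioo (δs k₁) (δs k₂) ⊆ Ioo (m * δbar) (M * δbar) :=
    Ioo_subset_Ioo (hfeas k₁).1 (hfeas k₂).2
  have hslope := slope_lt_slope_of_strictMonoOn_deriv (hcont.mono hsub)
    (fun x hx => (h_deriv x (Ioo_subset_Icc_self (hsubIoo hx))).hasDerivAt
      (Icc_mem_nhds (hsubIoo hx).1 (hsubIoo hx).2))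
    (h'_mono.mono hsubIoo) hs hst ht
  have hfty : h (δs k₂) < h t :=
    h_anti (hsub ⟨by linarith, ht.le⟩) (hfeas k₂) ht
  have hcost := exchange_cost_lt (ha k₁) (ha k₂) (hb k₁) hν hs ht hfty hslope hbal
  set δ' := update (update δs k₁ s) k₂ t
  have hδ' : ∀ F : Fin N → ℝ → ℝ, ∑ k, F k (δ' k) =
      ∑ k, F k (δs k) + (F k₁ s - F k₁ (δs k₁)) + (F k₂ t - F k₂ (δs k₂)) := fun F => by
    rw [Fintype.sum_apply_update, Fintype.sum_apply_update, update_of_ne hk.symm]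
  have hfeas' : ∀ k, δ' k ∈ Icc (m * δbar) (M * δbar) := by
    intro k
    simp only [δ', update_apply]
    split_ifs
    exacts [hsub ⟨by linarith, ht.le⟩, hsub ⟨hs.le, by linarith⟩, hfeas k]
  have hbudget' : ∑ k, b k * h (δ' k) = (∑ k, b k) * h δbar := by
    rw [hδ' fun k x => b k * h x, hbudget]; linarith
  have hle := hopt δ' hfeas' hbudget'
  rw [hδ' fun k x => a k * x] at hle
  linarith

/-- Ordering property of optimal inexactness schedules. -/
theorem ordering_optimal_schedule
    (N : ℕ) (δbar m M : ℝ)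
    (hδbar : 0 < δbar) (hm : 0 ≤ m) (hm1 : m < 1) (hM : 1 < M)
    (a b : Fin N → ℝ) (ha : ∀ k, 0 < a k) (hb : ∀ k, 0 < b k)
    (h h' : ℝ → ℝ)
    (h_nonneg : ∀ σ ∈ Set.Icc (m * δbar) (M * δbar), 0 ≤ h σ)
    (h_deriv : ∀ σ ∈ Set.Icc (m * δbar) (M * δbar),
      HasDerivWithinAt h (h' σ) (Set.Icc (m * δbar) (M * δbar)) σ)
    (h_anti : StrictAntiOn h (Set.Icc (m * δbar) (M * δbar)))
    (h'_neg : ∀ σ ∈ Set.Ioo (m * δbar) (M * δbar), h' σ < 0)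
    (h'_mono : StrictMonoOn h' (Set.Ioo (m * δbar) (M * δbar)))
    (δs : Fin N → ℝ)
    (hfeas : ∀ k, δs k ∈ Set.Icc (m * δbar) (M * δbar))
    (hbudget : ∑ k, b k * h (δs k) = (∑ k, b k) * h δbar)
    (hopt : ∀ δ : Fin N → ℝ, (∀ k, δ k ∈ Set.Icc (m * δbar) (M * δbar)) →
      (∑ k, b k * h (δ k) = (∑ k, b k) * h δbar) →
      ∑ k, a k * δs k ≤ ∑ k, a k * δ k)
    (k₁ k₂ : Fin N)
    (hν : b k₂ / a k₂ ≤ b k₁ / a k₁) :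
    δs k₂ ≤ δs k₁ :=
  ordering_optimal_schedule_general N δbar m M a b ha hb h h' h_deriv h_anti h'_mono δs hfeas
    hbudget hopt k₁ k₂ hν
end

section
/- Structure of optimal inexactness schedules (Theorem 3.6). Consider the master problem under Assumption B. Then there exist integers N⊕, N⊖ ∈ {0,…,N−1}, a real number λ*, and a bijection ρ of {0,…,N−1} such that ρ(k₁) < ρ(k₂) implies b_{k₁}/a_{k₁} ≥ b_{k₂}/a_{k₂} (ρ is a descending rank for the values ν_k = b_k/a_k), for which the vector δ* defined by: δ*_k = M·δ̄ whenever ρ(k) < N⊕; δ*_k = (h')⁻¹(λ*·a_k/b_k) whenever N⊕ ≤ ρ(k) ≤ N−1−N⊖ (in particular λ*·a_k/b_k lies in the range of h' for every such k); and δ*_k = m·δ̄ whenever ρ(k) > N−1−N⊖; satisfies the budget identity (∑_{k=0}^{N−1} b_k)·h(δ̄) − [h(M·δ̄)·∑_{k: ρ(k)<N⊕} b_k + h(m·δ̄)·∑_{k: ρ(k)>N−1−N⊖} b_k] = ∑_{k: N⊕≤ρ(k)≤N−1−N⊖} b_k·h((h')⁻¹(λ*·a_k/b_k)), and δ* is an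 optimal solution of the master problem. -/
/-!
For a multiplier `λ < 0` the Lagrangian `∑ b_k h(δ_k) - λ ∑ a_k δ_k` separates: its `k`-th term
is minimized over `[m δ̄, M δ̄]` at `g(λ a_k / b_k)`, where `g y` minimizes `h σ - y σ`. Strict
convexity of `h` makes `g` the clamped inverse of `h'`, hence monotone and continuous, so the
intermediate value theorem finds `λ` for which this schedule meets the budget, and weak duality
makes it optimal. As `λ < 0`, the schedule decreases in `a_k / b_k`: ranked by descending
`b_k / a_k` it sits at `M δ̄` first, then in the interior (where `h' δ_k = λ a_k / b_k`), then
at `m δ̄`.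
-/

open Set Finset

/-- A minimizer of `t ↦ f t - y * t` on `s`. For `f` strictly convex on `[A, B]` with derivative
`f'`, this is `(f')⁻¹ y` clamped to `[A, B]`. -/
noncomputable def tiltArgmin (f : ℝ → ℝ) (s : Set ℝ) (y : ℝ) : ℝ :=
  Classical.epsilon fun σ => σ ∈ s ∧ IsMinOn (fun t => f t - y * t) s σ

section tiltArgmin

variable {f f' : ℝ → ℝ} {s : Set ℝ}

theorem tiltArgmin_spec_of_isMinOn {y σ : ℝ} (hσ : σ ∈ s)
    (hmin : IsMinOn (fun t => f t - y * t) s σ) :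
    tiltArgmin f s y ∈ s ∧ IsMinOn (fun t => f t - y * t) s (tiltArgmin f s y) :=
  Classical.epsilon_spec (p := fun σ => σ ∈ s ∧ IsMinOn (fun t => f t - y * t) s σ) ⟨σ, hσ, hmin⟩

theorem tiltArgmin_spec (hs : IsCompact s) (hne : s.Nonempty) (hf : ContinuousOn f s) (y : ℝ) :
    tiltArgmin f s y ∈ s ∧ IsMinOn (fun t => f t - y * t) s (tiltArgmin f s y) := by
  obtain ⟨σ, hσ, hmin⟩ := hs.exists_isMinOn hne (hf.sub (continuousOn_const.mul continuousOn_id))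
  exact tiltArgmin_spec_of_isMinOn hσ hmin

theorem tiltArgmin_eq_of_isMinOn (hf : StrictConvexOn ℝ s f) {y σ : ℝ} (hσ : σ ∈ s)
    (hmin : IsMinOn (fun t => f t - y * t) s σ) : tiltArgmin f s y = σ :=
  have hconv : StrictConvexOn ℝ s fun t => f t - y * t :=
    hf.sub_concaveOn ((LinearMap.mulLeft ℝ y).concaveOn hf.1)
  have hspec := tiltArgmin_spec_of_isMinOn hσ hmin
  hconv.eq_of_isMinOn hspec.2 hmin hspec.1 hσ

theorem monotone_tiltArgmin (hs : IsCompact s) (hne : s.Nonempty) (hf : ContinuousOn f s) :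
    Monotone (tiltArgmin f s) := by
  intro y₁ y₂ hy
  rcases hy.eq_or_lt with rfl | hlt
  · exact le_rfl
  obtain ⟨hx₁, hmin₁⟩ := tiltArgmin_spec hs hne hf y₁
  obtain ⟨hx₂, hmin₂⟩ := tiltArgmin_spec hs hne hf y₂
  have h₁ := isMinOn_iff.1 hmin₁ _ hx₂
  have h₂ := isMinOn_iff.1 hmin₂ _ hx₁
  have hprod : (y₂ - y₁) * (tiltArgmin f s y₁ - tiltArgmin f s y₂) ≤ 0 := by linarith
  exact sub_nonpos.1 (nonpos_of_mul_nonpos_right hprod (sub_pos.2 hlt))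

theorem ConvexOn.isMinOn_sub_mul_of_hasDerivWithinAt (hf : ConvexOn ℝ s f) {σ d : ℝ}
    (hσ : σ ∈ s) (hderiv : HasDerivWithinAt f d s σ) : IsMinOn (fun t => f t - d * t) s σ := by
  refine isMinOn_iff.2 fun τ hτ => ?_
  rcases lt_trichotomy σ τ with hlt | rfl | hgt
  · have := hf.le_slope_of_hasDerivWithinAt hσ hτ hlt hderiv
    rw [slope_def_field, le_div_iff₀ (sub_pos.2 hlt)] at this
    linarith
  · exact le_rfl
  · have := hf.slope_le_of_hasDerivWithinAt hτ hσ hgt hderiv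
    rw [slope_def_field, div_le_iff₀ (sub_pos.2 hgt)] at this
    linarith

variable {A B : ℝ}

theorem strictConvexOn_Icc_of_hasDerivWithinAt
    (hderiv : ∀ σ ∈ Icc A B, HasDerivWithinAt f (f' σ) (Icc A B) σ)
    (hmono : StrictMonoOn f' (Ioo A B)) : StrictConvexOn ℝ (Icc A B) f := by
  refine StrictMonoOn.strictConvexOn_of_deriv (convex_Icc A B)
    (fun σ hσ => (hderiv σ hσ).continuousWithinAt) ?_
  rw [interior_Icc]
  refine hmono.congr fun σ hσ => ?_
  exact ((hderiv σ (Ioo_subset_Icc_self hσ)).hasDerivAt (Icc_mem_nhds hσ.1 hσ.2)).deriv.symm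

theorem tiltArgmin_deriv_eq_self (hf : StrictConvexOn ℝ (Icc A B) f)
    (hderiv : ∀ σ ∈ Icc A B, HasDerivWithinAt f (f' σ) (Icc A B) σ) {σ : ℝ} (hσ : σ ∈ Icc A B) :
    tiltArgmin f (Icc A B) (f' σ) = σ :=
  tiltArgmin_eq_of_isMinOn hf hσ
    (hf.convexOn.isMinOn_sub_mul_of_hasDerivWithinAt hσ (hderiv σ hσ))

/-- Continuity comes for free: `tiltArgmin` is monotone and, by `tiltArgmin_deriv_eq_self`,
onto `[A, B]`. -/
theorem continuous_tiltArgmin (hAB : A ≤ B) (hf : StrictConvexOn ℝ (Icc A B) f)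
    (hderiv : ∀ σ ∈ Icc A B, HasDerivWithinAt f (f' σ) (Icc A B) σ) :
    Continuous (tiltArgmin f (Icc A B)) := by
  have hcont : ContinuousOn f (Icc A B) := fun σ hσ => (hderiv σ hσ).continuousWithinAt
  have hspec := tiltArgmin_spec isCompact_Icc (nonempty_Icc.2 hAB) hcont
  let g : ℝ → Icc A B := fun y => ⟨tiltArgmin f (Icc A B) y, (hspec y).1⟩
  have hg : Monotone g := fun _ _ hy =>
    monotone_tiltArgmin isCompact_Icc (nonempty_Icc.2 hAB) hcont hy
  have hsurj : Function.Surjective g := fun σ =>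
    ⟨f' σ, Subtype.ext (tiltArgmin_deriv_eq_self hf hderiv σ.2)⟩
  exact continuous_subtype_val.comp (hg.continuous_of_surjective hsurj)

theorem deriv_tiltArgmin_eq_of_mem_Ioo
    (hderiv : ∀ σ ∈ Icc A B, HasDerivWithinAt f (f' σ) (Icc A B) σ) {y : ℝ}
    (hy : tiltArgmin f (Icc A B) y ∈ Ioo A B) : f' (tiltArgmin f (Icc A B) y) = y := by
  set σ := tiltArgmin f (Icc A B) y
  have hmin := (tiltArgmin_spec isCompact_Icc (nonempty_Icc.2 (hy.1.trans hy.2).le)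
    (fun τ hτ => (hderiv τ hτ).continuousWithinAt) y).2
  have hderivσ : HasDerivAt (fun t => f t - y * t) (f' σ - y) σ := by
    have := ((hderiv σ (Ioo_subset_Icc_self hy)).hasDerivAt (Icc_mem_nhds hy.1 hy.2)).sub
      ((hasDerivAt_id' σ).const_mul y)
    rwa [mul_one] at this
  exact sub_eq_zero.1 ((hmin.isLocalMin (Icc_mem_nhds hy.1 hy.2)).hasDerivAt_eq_zero hderivσ)

theorem tiltArgmin_zero_of_strictAntiOn (hAB : A ≤ B) (hf : StrictAntiOn f (Icc A B)) :
    tiltArgmin f (Icc A B) 0 = B := by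
  have hB : B ∈ Icc A B := right_mem_Icc.2 hAB
  obtain ⟨hσ, hmin⟩ := tiltArgmin_spec_of_isMinOn (f := f) (y := 0) hB
    (isMinOn_iff.2 fun τ hτ => by simpa using hf.antitoneOn hτ hB hτ.2)
  by_contra hne
  have := isMinOn_iff.1 hmin B hB
  simp only [zero_mul, sub_zero] at this
  exact (hf hσ hB (lt_of_le_of_ne hσ.2 hne)).not_ge this

theorem exists_neg_multiplier_budget {ι : Type*} [Fintype ι] [Nonempty ι] {a b : ι → ℝ}
    (ha : ∀ k, 0 < a k) (hb : ∀ k, 0 < b k) (hf : StrictConvexOn ℝ (Icc A B) f)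
    (hderiv : ∀ σ ∈ Icc A B, HasDerivWithinAt f (f' σ) (Icc A B) σ)
    (hanti : StrictAntiOn f (Icc A B)) {δ : ℝ} (hδ : δ ∈ Ico A B) :
    ∃ lam < 0, ∑ k, b k * f (tiltArgmin f (Icc A B) (lam * a k / b k)) = (∑ k, b k) * f δ := by
  have hAB : A ≤ B := hδ.1.trans hδ.2.le
  have hδ' : δ ∈ Icc A B := Ico_subset_Icc_self hδ
  have hcont : ContinuousOn f (Icc A B) := fun σ hσ => (hderiv σ hσ).continuousWithinAt
  set g := tiltArgmin f (Icc A B)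
  have hg_mem : ∀ y, g y ∈ Icc A B := fun y =>
    (tiltArgmin_spec isCompact_Icc (nonempty_Icc.2 hAB) hcont y).1
  set Φ : ℝ → ℝ := fun lam => ∑ k, b k * f (g (lam * a k / b k))
  have hΦ : Continuous Φ := by
    refine continuous_finsetSum _ fun k _ => continuous_const.mul ?_
    exact hcont.comp_continuous ((continuous_tiltArgmin hAB hf hderiv).comp (by fun_prop))
      fun _ => hg_mem _
  have hC : (∑ k, b k) * f δ = ∑ k, b k * f δ := sum_mul ..
  have hΦ_zero : Φ 0 < (∑ k, b k) * f δ := by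
    simp only [Φ, zero_mul, zero_div, g, tiltArgmin_zero_of_strictAntiOn hAB hanti, hC]
    exact sum_lt_sum_of_nonempty univ_nonempty fun k _ =>
      mul_lt_mul_of_pos_left (hanti hδ' (right_mem_Icc.2 hAB) hδ.2) (hb k)
  -- below the slope `f' δ` the tilted minimizer lies left of `δ`, where `f` is larger
  obtain ⟨lam₀, hlam₀, hlam₀_le⟩ : ∃ lam₀ : ℝ, lam₀ < 0 ∧ ∀ k, lam₀ * a k / b k ≤ f' δ :=
    ((Filter.eventually_lt_atBot 0).and (Filter.eventually_all.2 fun k =>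
      ((Filter.tendsto_id.atBot_mul_const (ha k)).atBot_div_const (hb k)).eventually
        (Filter.eventually_le_atBot _))).exists
  have hΦ_lam₀ : (∑ k, b k) * f δ ≤ Φ lam₀ := by
    rw [hC]
    refine sum_le_sum fun k _ => mul_le_mul_of_nonneg_left ?_ (hb k).le
    refine hanti.antitoneOn (hg_mem _) hδ' ?_
    calc g (lam₀ * a k / b k)
        ≤ g (f' δ) := monotone_tiltArgmin isCompact_Icc (nonempty_Icc.2 hAB) hcont (hlam₀_le k)
      _ = δ := tiltArgmin_deriv_eq_self hf hderiv hδ'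
  obtain ⟨lam, hlam, hΦlam⟩ :=
    intermediate_value_Icc' hlam₀.le hΦ.continuousOn ⟨hΦ_zero.le, hΦ_lam₀⟩
  refine ⟨lam, lt_of_le_of_ne hlam.2 ?_, hΦlam⟩
  rintro rfl
  exact hΦ_zero.ne hΦlam

end tiltArgmin

theorem mul_div_le_mul_div_of_div_le_div {lam a₁ b₁ a₂ b₂ : ℝ} (hlam : lam ≤ 0) (ha₁ : 0 < a₁)
    (hb₁ : 0 < b₁) (h : b₁ / a₁ ≤ b₂ / a₂) : lam * a₁ / b₁ ≤ lam * a₂ / b₂ := by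
  have := div_le_div_of_nonneg_left (neg_nonneg.2 hlam) (div_pos hb₁ ha₁) h
  rwa [neg_div, neg_div, neg_le_neg_iff, div_div_eq_mul_div, div_div_eq_mul_div] at this

/-- Weak duality for the Lagrangian `∑ k, b k * φ (x k) - lam * ∑ k, a k * x k`. -/
theorem sum_mul_le_of_forall_isMinOn {ι : Type*} [Fintype ι] {φ : ℝ → ℝ} {s : Set ℝ}
    {a b x y : ι → ℝ} {lam : ℝ} (hb : ∀ k, 0 < b k) (hlam : lam < 0)
    (hx : ∀ k, IsMinOn (fun t => φ t - lam * a k / b k * t) s (x k)) (hy : ∀ k, y k ∈ s)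
    (hxy : ∑ k, b k * φ (x k) = ∑ k, b k * φ (y k)) :
    ∑ k, a k * x k ≤ ∑ k, a k * y k := by
  have hterm : ∀ k, b k * φ (x k) - lam * (a k * x k) ≤ b k * φ (y k) - lam * (a k * y k) := by
    intro k
    have hscale : ∀ t, b k * (φ t - lam * a k / b k * t) = b k * φ t - lam * (a k * t) := by
      intro t
      field_simp [(hb k).ne']
    simpa only [hscale] using mul_le_mul_of_nonneg_left (isMinOn_iff.1 (hx k) _ (hy k)) (hb k).le
  have hsum := sum_le_sum (s := Finset.univ) fun k _ => hterm k
  rw [sum_sub_distrib, sum_sub_distrib, ← mul_sum, ← mul_sum, hxy] at hsum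
  exact (mul_le_mul_left_of_neg hlam).1 (by linarith)

theorem exists_ne_of_sum_mul_eq {ι : Type*} [Fintype ι] [Nonempty ι] {b x : ι → ℝ} {φ : ℝ → ℝ}
    {c d : ℝ} (hb : ∀ k, 0 < b k) (hsum : ∑ k, b k * φ (x k) = (∑ k, b k) * φ d)
    (hc : φ c ≠ φ d) : ∃ k, x k ≠ c := by
  by_contra! hall
  simp only [hall, ← sum_mul] at hsum
  exact hc (mul_left_cancel₀ (sum_pos (fun k _ => hb k) univ_nonempty).ne' hsum)

theorem sum_mul_comp_eq_of_const_on {ι : Type*} [Fintype ι] (p q : ι → Prop) [DecidablePred p]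
    [DecidablePred q] {b x : ι → ℝ} {φ : ℝ → ℝ} {c₁ c₂ : ℝ} (hp : ∀ k, p k → x k = c₁)
    (hq : ∀ k, q k → x k = c₂) (hpq : ∀ k, p k → ¬ q k) :
    ∑ k, b k * φ (x k) = φ c₁ * ∑ k with p k, b k + φ c₂ * ∑ k with q k, b k +
      ∑ k with ¬ p k ∧ ¬ q k, b k * φ (x k) := by
  rw [← sum_filter_add_sum_filter_not _ p, ← sum_filter_add_sum_filter_not (filter (¬ p ·) _) q,
    filter_filter, filter_filter, mul_sum, mul_sum, ← add_assoc]
  congr 2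
  · exact sum_congr rfl fun k hk => by rw [hp k (mem_filter.1 hk).2, mul_comm]
  · refine sum_congr (filter_congr fun k _ => ⟨And.right, fun hk => ⟨fun hpk => hpq k hpk hk, hk⟩⟩)
      fun k hk => ?_
    rw [hq k (mem_filter.1 hk).2, mul_comm]

theorem Fin.mem_iff_lt_card_of_isLowerSet {n : ℕ} {s : Finset (Fin n)}
    (hs : IsLowerSet (s : Set (Fin n))) (j : Fin n) : j ∈ s ↔ (j : ℕ) < #s := by
  constructor
  · intro hj
    have := card_le_card fun i hi => hs (mem_Iic.1 hi) hj
    rw [Fin.card_Iic] at this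
    omega
  · intro hj
    by_contra hnj
    have := card_le_card fun i (hi : i ∈ s) =>
      mem_Iio.2 (lt_of_not_ge fun hji => hnj (hs hji hi))
    rw [Fin.card_Iio] at this
    omega

theorem Fin.mem_iff_sub_card_le_of_isUpperSet {n : ℕ} {s : Finset (Fin n)}
    (hs : IsUpperSet (s : Set (Fin n))) (j : Fin n) : j ∈ s ↔ n - #s ≤ (j : ℕ) := by
  have hrev : IsLowerSet ((s.map Fin.revPerm.toEmbedding : Finset (Fin n)) : Set (Fin n)) := by
    intro i i' hi' hi
    simp only [coe_map, Equiv.coe_toEmbedding, Set.mem_image, mem_coe, Fin.revPerm_apply] at hi ⊢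
    obtain ⟨k, hk, rfl⟩ := hi
    exact ⟨i'.rev, hs (Fin.le_rev_iff.1 hi') hk, Fin.rev_rev _⟩
  have := Fin.mem_iff_lt_card_of_isLowerSet hrev j.rev
  simp only [mem_map_equiv, Fin.revPerm_symm, Fin.revPerm_apply, Fin.rev_rev, card_map,
    Fin.val_rev] at this
  rw [this]
  have := j.isLt
  omega

theorem exists_perm_antitone_comp_symm {n : ℕ} {α : Type*} [LinearOrder α] (w : Fin n → α) :
    ∃ ρ : Equiv.Perm (Fin n), Antitone (w ∘ ρ.symm) :=
  ⟨(Fin.revPerm.trans (Tuple.sort w)).symm, (Tuple.monotone_sort w).comp_antitone Fin.rev_anti⟩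

theorem exists_rank_thresholds {n : ℕ} {α : Type*} [PartialOrder α] {x : Fin n → α} {A B : α}
    (ρ : Equiv.Perm (Fin n)) (hx : ∀ k, x k ∈ Icc A B) (hanti : Antitone (x ∘ ρ.symm))
    (hB : ∃ k, x k ≠ B) (hA : ∃ k, x k ≠ A) :
    ∃ P Q : ℕ, P ≤ n - 1 ∧ Q ≤ n - 1 ∧
      (∀ k, x k = B ↔ (ρ k : ℕ) < P) ∧ (∀ k, x k = A ↔ n - 1 - Q < (ρ k : ℕ)) ∧
      (∀ k, P ≤ (ρ k : ℕ) → (ρ k : ℕ) ≤ n - 1 - Q → x k ∈ Ioo A B) := by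
  classical
  have hcard : ∀ {c : α}, (∃ k, x k ≠ c) → #{j | x (ρ.symm j) = c} < n := by
    rintro c ⟨k, hk⟩
    simpa using card_lt_univ_of_notMem (s := {j | x (ρ.symm j) = c}) (x := ρ k) (by simpa using hk)
  set top : Finset (Fin n) := {j | x (ρ.symm j) = B}
  set bot : Finset (Fin n) := {j | x (ρ.symm j) = A}
  have htop : IsLowerSet (top : Set (Fin n)) := fun i j hji hi => by
    simp only [top, mem_coe, mem_filter, Finset.mem_univ, true_and] at hi ⊢
    exact le_antisymm (hx _).2 (hi ▸ hanti hji)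
  have hbot : IsUpperSet (bot : Set (Fin n)) := fun i j hij hi => by
    simp only [bot, mem_coe, mem_filter, Finset.mem_univ, true_and] at hi ⊢
    exact le_antisymm (hi ▸ hanti hij) (hx _).1
  have htop_lt : #top < n := hcard hB
  have hbot_lt : #bot < n := hcard hA
  have hB_iff : ∀ k, x k = B ↔ (ρ k : ℕ) < #top := fun k => by
    simpa [top] using Fin.mem_iff_lt_card_of_isLowerSet htop (ρ k)
  have hA_iff : ∀ k, x k = A ↔ n - 1 - #bot < (ρ k : ℕ) := fun k => by
    rw [show x k = A ↔ ρ k ∈ bot by simp [bot], Fin.mem_iff_sub_card_le_of_isUpperSet hbot]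
    omega
  refine ⟨#top, #bot, by omega, by omega, hB_iff, hA_iff, fun k h₁ h₂ => ⟨?_, ?_⟩⟩
  · exact (hx k).1.lt_of_ne fun e => by have := (hA_iff k).1 e.symm; omega
  · exact (hx k).2.lt_of_ne fun e => by have := (hB_iff k).1 e; omega

theorem structure_optimal_schedule_general
    (N : ℕ) (hN : 0 < N) (δbar m M : ℝ)
    (hδbar : 0 < δbar) (hm1 : m < 1) (hM : 1 < M)
    (a b : Fin N → ℝ) (ha : ∀ k, 0 < a k) (hb : ∀ k, 0 < b k)
    (h h' : ℝ → ℝ)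
    (h_deriv : ∀ σ ∈ Set.Icc (m * δbar) (M * δbar),
      HasDerivWithinAt h (h' σ) (Set.Icc (m * δbar) (M * δbar)) σ)
    (h_anti : StrictAntiOn h (Set.Icc (m * δbar) (M * δbar)))
    (h'_mono : StrictMonoOn h' (Set.Ioo (m * δbar) (M * δbar))) :
    ∃ Nplus Nminus : ℕ, Nplus ≤ N - 1 ∧ Nminus ≤ N - 1 ∧
    ∃ lam : ℝ, ∃ ρ : Equiv.Perm (Fin N),
      (∀ k₁ k₂ : Fin N, ρ k₁ < ρ k₂ → b k₂ / a k₂ ≤ b k₁ / a k₁) ∧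
      ∃ δstar : Fin N → ℝ,
        -- the three regimes of the schedule
        (∀ k, (ρ k : ℕ) < Nplus → δstar k = M * δbar) ∧
        (∀ k, Nplus ≤ (ρ k : ℕ) → (ρ k : ℕ) ≤ N - 1 - Nminus →
          -- δstar k = (h')⁻¹ (lam * a k / b k), i.e. lam * a k / b k
          -- lies in the range of h' and δstar k is its preimage
          δstar k ∈ Set.Icc (m * δbar) (M * δbar) ∧
          h' (δstar k) = lam * a k / b k) ∧
        (∀ k, N - 1 - Nminus < (ρ k : ℕ) → δstar k = m * δbar) ∧
        -- the budget identity
        ((∑ k, b k) * h δbar -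
            (h (M * δbar) * ∑ k ∈ univ.filter (fun k => (ρ k : ℕ) < Nplus), b k +
             h (m * δbar) * ∑ k ∈ univ.filter (fun k => N - 1 - Nminus < (ρ k : ℕ)), b k)
          = ∑ k ∈ univ.filter
              (fun k => Nplus ≤ (ρ k : ℕ) ∧ (ρ k : ℕ) ≤ N - 1 - Nminus),
              b k * h (δstar k)) ∧
        -- δstar is an optimal solution of the master problem
        (∀ k, δstar k ∈ Set.Icc (m * δbar) (M * δbar)) ∧
        (∑ k, b k * h (δstar k) = (∑ k, b k) * h δbar) ∧
        (∀ δ : Fin N → ℝ, (∀ k, δ k ∈ Set.Icc (m * δbar) (M * δbar)) →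
          (∑ k, b k * h (δ k) = (∑ k, b k) * h δbar) →
          ∑ k, a k * δstar k ≤ ∑ k, a k * δ k) := by
  set A := m * δbar
  set B := M * δbar
  have hδ : δbar ∈ Ioo A B := ⟨by nlinarith, by nlinarith⟩
  have hAB : A < B := hδ.1.trans hδ.2
  have hcont : ContinuousOn h (Icc A B) := fun σ hσ => (h_deriv σ hσ).continuousWithinAt
  have : Nonempty (Fin N) := ⟨⟨0, hN⟩⟩
  obtain ⟨lam, hlam, hbudget⟩ := exists_neg_multiplier_budget ha hb
    (strictConvexOn_Icc_of_hasDerivWithinAt h_deriv h'_mono) h_deriv h_anti (Ioo_subset_Ico_self hδ)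
  set δstar : Fin N → ℝ := fun k => tiltArgmin h (Icc A B) (lam * a k / b k)
  have hspec := tiltArgmin_spec isCompact_Icc (nonempty_Icc.2 hAB.le) hcont
  obtain ⟨ρ, hρ⟩ := exists_perm_antitone_comp_symm fun k => b k / a k
  have hanti : Antitone (δstar ∘ ρ.symm) := fun i j hij =>
    monotone_tiltArgmin isCompact_Icc (nonempty_Icc.2 hAB.le) hcont
      (mul_div_le_mul_div_of_div_le_div hlam.le (ha _) (hb _) (hρ hij))
  have hne : ∀ c ∈ Icc A B, c ≠ δbar → ∃ k, δstar k ≠ c := fun c hc hcδ =>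
    exists_ne_of_sum_mul_eq hb hbudget (h_anti.injOn.ne hc (Ioo_subset_Icc_self hδ) hcδ)
  obtain ⟨Nplus, Nminus, hP, hQ, hplus, hminus, hmid⟩ := exists_rank_thresholds ρ
    (fun k => (hspec _).1) hanti (hne B (right_mem_Icc.2 hAB.le) hδ.2.ne')
    (hne A (left_mem_Icc.2 hAB.le) hδ.1.ne)
  refine ⟨Nplus, Nminus, hP, hQ, lam, ρ, fun k₁ k₂ hlt => by simpa using hρ hlt.le, δstar,
    fun k hk => (hplus k).2 hk, fun k h₁ h₂ => ⟨(hspec _).1,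
      deriv_tiltArgmin_eq_of_mem_Ioo h_deriv (hmid k h₁ h₂)⟩, fun k hk => (hminus k).2 hk,
    ?_, fun k => (hspec _).1, hbudget, fun δ hδ hδbudget =>
      sum_mul_le_of_forall_isMinOn hb hlam (fun k => (hspec _).2) hδ (hbudget.trans hδbudget.symm)⟩
  rw [sum_mul_comp_eq_of_const_on _ _ (fun k => (hplus k).2) (fun k => (hminus k).2)
    fun k hk hk' => hAB.ne ((hminus k).2 hk' ▸ (hplus k).2 hk)] at hbudget
  simp only [not_lt] at hbudget
  linarith

/-- Structure of optimal inexactness schedules (Theorem 3.6). -/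
theorem structure_optimal_schedule
    (N : ℕ) (hN : 0 < N) (δbar m M : ℝ)
    (hδbar : 0 < δbar) (hm : 0 ≤ m) (hm1 : m < 1) (hM : 1 < M)
    (a b : Fin N → ℝ) (ha : ∀ k, 0 < a k) (hb : ∀ k, 0 < b k)
    (h h' : ℝ → ℝ)
    (h_nonneg : ∀ σ ∈ Set.Icc (m * δbar) (M * δbar), 0 ≤ h σ)
    (h_deriv : ∀ σ ∈ Set.Icc (m * δbar) (M * δbar),
      HasDerivWithinAt h (h' σ) (Set.Icc (m * δbar) (M * δbar)) σ)
    (h_anti : StrictAntiOn h (Set.Icc (m * δbar) (M * δbar)))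
    (h'_neg : ∀ σ ∈ Set.Ioo (m * δbar) (M * δbar), h' σ < 0)
    (h'_mono : StrictMonoOn h' (Set.Ioo (m * δbar) (M * δbar)))
    (h'_inj : Set.InjOn h' (Set.Icc (m * δbar) (M * δbar))) :
    ∃ Nplus Nminus : ℕ, Nplus ≤ N - 1 ∧ Nminus ≤ N - 1 ∧
    ∃ lam : ℝ, ∃ ρ : Equiv.Perm (Fin N),
      (∀ k₁ k₂ : Fin N, ρ k₁ < ρ k₂ → b k₂ / a k₂ ≤ b k₁ / a k₁) ∧
      ∃ δstar : Fin N → ℝ,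
        -- the three regimes of the schedule
        (∀ k, (ρ k : ℕ) < Nplus → δstar k = M * δbar) ∧
        (∀ k, Nplus ≤ (ρ k : ℕ) → (ρ k : ℕ) ≤ N - 1 - Nminus →
          -- δstar k = (h')⁻¹ (lam * a k / b k), i.e. lam * a k / b k
          -- lies in the range of h' and δstar k is its preimage
          δstar k ∈ Set.Icc (m * δbar) (M * δbar) ∧
          h' (δstar k) = lam * a k / b k) ∧
        (∀ k, N - 1 - Nminus < (ρ k : ℕ) → δstar k = m * δbar) ∧
        -- the budget identity
        ((∑ k, b k) * h δbar -
            (h (M * δbar) * ∑ k ∈ univ.filter (fun k => (ρ k : ℕ) < Nplus), b k +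
             h (m * δbar) * ∑ k ∈ univ.filter (fun k => N - 1 - Nminus < (ρ k : ℕ)), b k)
          = ∑ k ∈ univ.filter
              (fun k => Nplus ≤ (ρ k : ℕ) ∧ (ρ k : ℕ) ≤ N - 1 - Nminus),
              b k * h (δstar k)) ∧
        -- δstar is an optimal solution of the master problem
        (∀ k, δstar k ∈ Set.Icc (m * δbar) (M * δbar)) ∧
        (∑ k, b k * h (δstar k) = (∑ k, b k) * h δbar) ∧
        (∀ δ : Fin N → ℝ, (∀ k, δ k ∈ Set.Icc (m * δbar) (M * δbar)) →
          (∑ k, b k * h (δ k) = (∑ k, b k) * h δbar) →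
          ∑ k, a k * δstar k ≤ ∑ k, a k * δ k) :=
  structure_optimal_schedule_general N hN δbar m M hδbar hm1 hM a b ha hb h h' h_deriv h_anti
    h'_mono
end

section
/- Uniqueness of the optimal inexactness schedule. Consider the master problem under Assumption B. If in addition the values ν_k = b_k/a_k, k = 0,…,N−1, are pairwise distinct, then the master problem admits a unique optimal solution. -/
/-- Uniqueness of the optimal inexactness schedule. -/
theorem uniqueness_optimal_schedule
    (N : ℕ) (δbar m M : ℝ)
    (hδbar : 0 < δbar) (hm : 0 ≤ m) (hm1 : m < 1) (hM : 1 < M)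
    (a b : Fin N → ℝ) (ha : ∀ k, 0 < a k) (hb : ∀ k, 0 < b k)
    (h h' : ℝ → ℝ)
    (h_nonneg : ∀ σ ∈ Set.Icc (m * δbar) (M * δbar), 0 ≤ h σ)
    (h_deriv : ∀ σ ∈ Set.Icc (m * δbar) (M * δbar),
      HasDerivWithinAt h (h' σ) (Set.Icc (m * δbar) (M * δbar)) σ)
    (h_anti : StrictAntiOn h (Set.Icc (m * δbar) (M * δbar)))
    (h'_neg : ∀ σ ∈ Set.Ioo (m * δbar) (M * δbar), h' σ < 0)
    (h'_mono : StrictMonoOn h' (Set.Ioo (m * δbar) (M * δbar)))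
    (hdistinct : ∀ k₁ k₂ : Fin N, k₁ ≠ k₂ → b k₁ / a k₁ ≠ b k₂ / a k₂) :
    ∃! δs : Fin N → ℝ,
      (∀ k, δs k ∈ Set.Icc (m * δbar) (M * δbar)) ∧
      (∑ k, b k * h (δs k) = (∑ k, b k) * h δbar) ∧
      (∀ δ : Fin N → ℝ, (∀ k, δ k ∈ Set.Icc (m * δbar) (M * δbar)) →
        (∑ k, b k * h (δ k) = (∑ k, b k) * h δbar) →
        ∑ k, a k * δs k ≤ ∑ k, a k * δ k) := by
  rcases Nat.eq_zero_or_pos N with rfl | hN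
  · exact ⟨fun _ => δbar, ⟨fun k => k.elim0, by simp, fun δ _ _ => by simp⟩,
      fun y _ => funext fun k => k.elim0⟩
  haveI : Nonempty (Fin N) := ⟨⟨0, hN⟩⟩
  have hmδ : m * δbar < δbar := by nlinarith
  have hδM : δbar < M * δbar := by nlinarith
  have hmM : m * δbar < M * δbar := hmδ.trans hδM
  have hδI : δbar ∈ Set.Icc (m * δbar) (M * δbar) := ⟨hmδ.le, hδM.le⟩
  have hmI : m * δbar ∈ Set.Icc (m * δbar) (M * δbar) := ⟨le_refl _, hmM.le⟩
  have hcont : ContinuousOn h (Set.Icc (m * δbar) (M * δbar)) :=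
    fun x hx => (h_deriv x hx).continuousWithinAt
  -- strict convexity of h on the interval
  have hconv : StrictConvexOn ℝ (Set.Icc (m * δbar) (M * δbar)) h := by
    apply StrictMonoOn.strictConvexOn_of_deriv (convex_Icc _ _) hcont
    rw [interior_Icc]
    intro x hx y hy hxy
    have dx : deriv h x = h' x :=
      ((h_deriv x (Set.Ioo_subset_Icc_self hx)).hasDerivAt
        (Icc_mem_nhds hx.1 hx.2)).deriv
    have dy : deriv h y = h' y :=
      ((h_deriv y (Set.Ioo_subset_Icc_self hy)).hasDerivAt
        (Icc_mem_nhds hy.1 hy.2)).deriv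
    rw [dx, dy]
    exact h'_mono hx hy hxy
  have hmid : ∀ x y : ℝ, x ∈ Set.Icc (m * δbar) (M * δbar) →
      y ∈ Set.Icc (m * δbar) (M * δbar) → x ≠ y →
      h ((x + y)/2) < (h x + h y)/2 := by
    intro x y hx hy hxy
    have := hconv.2 hx hy hxy (show (0:ℝ) < 1/2 by norm_num)
      (show (0:ℝ) < 1/2 by norm_num) (by norm_num)
    simp only [smul_eq_mul] at this
    calc h ((x+y)/2) = h (1/2 * x + 1/2 * y) := by ring_nf
      _ < 1/2 * h x + 1/2 * h y := this
      _ = (h x + h y)/2 := by ring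
  set c : ℝ := (∑ k, b k) * h δbar with hc
  set R : Set (Fin N → ℝ) :=
    {δ | (∀ k, δ k ∈ Set.Icc (m * δbar) (M * δbar)) ∧ ∑ k, b k * h (δ k) ≤ c}
    with hRdef
  -- the box
  set B : Set (Fin N → ℝ) := {δ | ∀ k, δ k ∈ Set.Icc (m * δbar) (M * δbar)} with hBdef
  have hBpi : B = Set.univ.pi (fun _ : Fin N => Set.Icc (m * δbar) (M * δbar)) := by
    ext δ; simp only [hBdef, Set.mem_univ_pi, Set.mem_setOf_eq]
  have hBc : IsCompact B := by
    rw [hBpi]; exact isCompact_univ_pi fun _ => isCompact_Icc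
  have hBclosed : IsClosed B := by
    rw [hBpi]; exact isClosed_set_pi fun _ _ => isClosed_Icc
  have hfc : ContinuousOn (fun δ : Fin N → ℝ => ∑ k, b k * h (δ k)) B := by
    apply continuousOn_finset_sum
    intro k _
    exact continuousOn_const.mul
      (hcont.comp (continuous_apply k).continuousOn (fun δ hδ => hδ k))
  have hRB : R = B ∩ (fun δ : Fin N → ℝ => ∑ k, b k * h (δ k)) ⁻¹' Set.Iic c := by
    ext δ; simp [hRdef, hBdef]
  have hRclosed : IsClosed R := by
    rw [hRB]
    exact hfc.preimage_isClosed_of_isClosed hBclosed isClosed_Iic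
  have hRc : IsCompact R :=
    hBc.of_isClosed_subset hRclosed (by rw [hRB]; exact Set.inter_subset_left)
  have hRne : R.Nonempty := by
    refine ⟨fun _ => δbar, fun _ => hδI, ?_⟩
    rw [hc, Finset.sum_mul]
  -- existence of a minimizer on R
  obtain ⟨δs, hδsR, hmin⟩ := hRc.exists_isMinOn hRne
    (Continuous.continuousOn (continuous_finset_sum _
      fun k _ => continuous_const.mul (continuous_apply k)))
  have hmin' : ∀ w ∈ R, ∑ k, a k * δs k ≤ ∑ k, a k * w k := fun w hw =>
    isMinOn_iff.mp hmin w hw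
  -- binding of the budget constraint at any minimizer over R
  have bind : ∀ x : Fin N → ℝ, x ∈ R →
      (∀ w ∈ R, ∑ k, a k * x k ≤ ∑ k, a k * w k) →
      ∑ k, b k * h (x k) = c := by
    intro x hxR hxmin
    by_contra hne
    have hlt : ∑ k, b k * h (x k) < c := lt_of_le_of_ne hxR.2 hne
    have hk0 : ∃ k₀, m * δbar < x k₀ := by
      by_contra hall
      push_neg at hall
      have hxall : ∀ k, x k = m * δbar := fun k => le_antisymm (hall k) (hxR.1 k).1
      have hgt : c < ∑ k, b k * h (x k) := by
        rw [hc, Finset.sum_mul]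
        apply Finset.sum_lt_sum_of_nonempty Finset.univ_nonempty
        intro k _
        rw [hxall k]
        exact mul_lt_mul_of_pos_left (h_anti hmI hδI hmδ) (hb k)
      linarith
    obtain ⟨k₀, hk₀⟩ := hk0
    set ε := c - ∑ k, b k * h (x k) with hε
    have hεpos : 0 < ε := by simp only [hε]; linarith
    have hxk₀I := hxR.1 k₀
    have ht : ∃ t, t ∈ Set.Ico (m * δbar) (x k₀) ∧ b k₀ * (h t - h (x k₀)) ≤ ε := by
      by_cases hcase : b k₀ * (h (m * δbar) - h (x k₀)) ≤ ε
      · exact ⟨m * δbar, ⟨le_refl _, hk₀⟩, hcase⟩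
      · push_neg at hcase
        have hsub : Set.Icc (m * δbar) (x k₀) ⊆ Set.Icc (m * δbar) (M * δbar) :=
          Set.Icc_subset_Icc (le_refl _) hxk₀I.2
        have hgc : ContinuousOn (fun t => b k₀ * (h t - h (x k₀)))
            (Set.Icc (m * δbar) (x k₀)) :=
          continuousOn_const.mul ((hcont.mono hsub).sub continuousOn_const)
        have hmem : ε ∈ Set.Icc (b k₀ * (h (x k₀) - h (x k₀)))
            (b k₀ * (h (m * δbar) - h (x k₀))) := by
          constructor
          · simp; linarith
          · exact hcase.le
        obtain ⟨t, htmem, hgt⟩ := intermediate_value_Icc' hk₀.le hgc hmem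
        refine ⟨t, ⟨htmem.1, lt_of_le_of_ne htmem.2 ?_⟩, hgt.le⟩
        intro heq
        rw [heq] at hgt
        have hgt2 : b k₀ * (h (x k₀) - h (x k₀)) = ε := hgt
        have hz0 : b k₀ * (h (x k₀) - h (x k₀)) = 0 := by ring
        rw [hz0] at hgt2
        linarith
    obtain ⟨t, htIco, htle⟩ := ht
    set y := Function.update x k₀ t with hy
    have upd_sum : ∀ (v : Fin N → ℝ) (φ : ℝ → ℝ),
        ∑ k, v k * φ (y k) = ∑ k, v k * φ (x k) + v k₀ * (φ t - φ (x k₀)) := by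
      intro v φ
      have e : ∀ k ∈ Finset.univ, v k * φ (y k) =
          v k * φ (x k) + (if k = k₀ then v k₀ * (φ t - φ (x k₀)) else 0) := by
        intro k _
        by_cases hk : k = k₀
        · subst hk; simp [hy, Function.update_self]; ring
        · simp [hy, Function.update_of_ne hk, hk]
      rw [Finset.sum_congr rfl e, Finset.sum_add_distrib]
      simp
    have hyR : y ∈ R := by
      constructor
      · intro k
        by_cases hk : k = k₀
        · subst hk
          simp only [hy, Function.update_self]
          exact ⟨htIco.1, htIco.2.le.trans hxk₀I.2⟩
        · simpa [hy, Function.update_of_ne hk] using hxR.1 k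
      · rw [upd_sum b h]; simp only [hε] at htle ⊢; linarith
    have hobj : ∑ k, a k * y k < ∑ k, a k * x k := by
      have hupd := upd_sum a id
      simp only [id] at hupd
      rw [hupd]
      have : a k₀ * (t - x k₀) < 0 :=
        mul_neg_of_pos_of_neg (ha k₀) (by linarith [htIco.2])
      linarith
    exact absurd (hxmin y hyR) (not_le.mpr hobj)
  have hδs_eq : ∑ k, b k * h (δs k) = c := bind δs hδsR hmin'
  refine ⟨δs, ⟨hδsR.1, hδs_eq, ?_⟩, ?_⟩
  · intro δ hδ hδeq
    exact hmin' δ ⟨hδ, le_of_eq hδeq⟩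
  · rintro y ⟨hyI, hyeq, hymin⟩
    by_contra hne
    obtain ⟨k₀, hk₀⟩ : ∃ k, y k ≠ δs k := by
      by_contra hall; push_neg at hall; exact hne (funext hall)
    have h1 : ∑ k, a k * y k ≤ ∑ k, a k * δs k := hymin δs hδsR.1 hδs_eq
    have h2 : ∑ k, a k * δs k ≤ ∑ k, a k * y k := hmin' y ⟨hyI, le_of_eq hyeq⟩
    have heqobj : ∑ k, a k * y k = ∑ k, a k * δs k := le_antisymm h1 h2
    set z : Fin N → ℝ := fun k => (y k + δs k) / 2 with hz
    have hzI : ∀ k, z k ∈ Set.Icc (m * δbar) (M * δbar) := by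
      intro k
      have h1 := hyI k
      have h2 := hδsR.1 k
      constructor
      · simp only [hz]; have := h1.1; have := h2.1; linarith
      · simp only [hz]; have := h1.2; have := h2.2; linarith
    have hzle : ∀ k, b k * h (z k) ≤ b k * ((h (y k) + h (δs k))/2) := by
      intro k
      by_cases hk : y k = δs k
      · have : z k = δs k := by simp only [hz, hk]; ring
        rw [this, hk]
        apply le_of_eq; ring
      · exact (mul_le_mul_of_nonneg_left
          (hmid (y k) (δs k) (hyI k) (hδsR.1 k) hk).le (hb k).le)
    have hzstrict : b k₀ * h (z k₀) < b k₀ * ((h (y k₀) + h (δs k₀))/2) :=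
      mul_lt_mul_of_pos_left (hmid (y k₀) (δs k₀) (hyI k₀) (hδsR.1 k₀) hk₀) (hb k₀)
    have hsum : ∑ k, b k * h (z k) < c := by
      calc ∑ k, b k * h (z k) < ∑ k, b k * ((h (y k) + h (δs k))/2) :=
            Finset.sum_lt_sum (fun k _ => hzle k) ⟨k₀, Finset.mem_univ _, hzstrict⟩
        _ = (∑ k, b k * h (y k) + ∑ k, b k * h (δs k)) / 2 := by
            rw [← Finset.sum_add_distrib, Finset.sum_div]
            exact Finset.sum_congr rfl fun k _ => by ring
        _ = c := by rw [hyeq, hδs_eq]; ring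
    have hzR : z ∈ R := ⟨hzI, hsum.le⟩
    have hzobj : ∑ k, a k * z k = ∑ k, a k * δs k := by
      have e : ∑ k, a k * z k = (∑ k, a k * y k + ∑ k, a k * δs k) / 2 := by
        rw [← Finset.sum_add_distrib, Finset.sum_div]
        exact Finset.sum_congr rfl fun k _ => by simp only [hz]; ring
      rw [e, heqobj]; ring
    have hzmin : ∀ w ∈ R, ∑ k, a k * z k ≤ ∑ k, a k * w k := by
      intro w hw
      rw [hzobj]
      exact hmin' w hw
    have := bind z hzR hzmin
    linarith
end

section
/- Closed-form optimal schedule for power-type oracle costs (Corollary 3.7). Let N ∈ ℕ, δ̄ > 0, 0 ≤ m < 1 < M, r > 0, and let a, b ∈ ℝ^N have strictly positive entries. Consider the problem: minimize ∑_{k=0}^{N−1} a_k δ_k over vectors δ ∈ ℝ^N with m·δ̄ ≤ δ_k ≤ M·δ̄ and δ_k > 0 for every k, subject to ∑_{k=0}^{N−1} b_k δ_k^{−r} = (∑_{k=0}^{N−1} b_k)·δ̄^{−r}. Define the vector δ̊ by δ̊_k = δ̄ · ( (∑_{j=0}^{N−1} (b_j a_j^r)^{1/(r+1)}) / (∑_{j=0}^{N−1}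 b_j) )^{1/r} · (b_k/a_k)^{1/(r+1)}. If m·δ̄ ≤ δ̊_k ≤ M·δ̄ for every k, then δ̊ is an optimal solution of this problem. -/
/-!
The problem is a convex program, and δ̊ is its KKT point: the objective gradient `a` is a
positive multiple of `k ↦ b k * δ̊ k ^ (-r - 1)`, the gradient of the constraint up to the factor
`-r`. Bounding each `δ_k ^ (-r)` by its tangent at `δ̊_k` (weighted AM-GM) and summing against
the common budget shows that no positive `δ` that meets the budget has smaller cost.
-/

open Real Finset

theorem add_one_le_rpow_neg_add_mul {r u : ℝ} (hr : 0 ≤ r) (hu : 0 < u) :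
    r + 1 ≤ u ^ (-r) + r * u := by
  have hr1 : 0 < r + 1 := by linarith
  have amgm := geom_mean_le_arith_mean2_weighted (w₁ := 1 / (r + 1)) (w₂ := r / (r + 1))
    (by positivity) (by positivity) (rpow_nonneg hu.le (-r)) hu.le (by field_simp; ring)
  have hgeom : (u ^ (-r)) ^ (1 / (r + 1)) * u ^ (r / (r + 1)) = 1 := by
    rw [← rpow_mul hu.le, ← rpow_add hu, show -r * (1 / (r + 1)) + r / (r + 1) = 0 by ring,
      rpow_zero]
  rw [hgeom] at amgm
  calc r + 1 = (r + 1) * 1 := (mul_one _).symm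
    _ ≤ (r + 1) * (1 / (r + 1) * u ^ (-r) + r / (r + 1) * u) := by gcongr
    _ = u ^ (-r) + r * u := by field_simp

theorem rpow_neg_sub_rpow_neg_le {r x y : ℝ} (hr : 0 ≤ r) (hx : 0 < x) (hy : 0 < y) :
    y ^ (-r) - x ^ (-r) ≤ r * y ^ (-r - 1) * (x - y) := by
  have key := add_one_le_rpow_neg_add_mul hr (div_pos hx hy)
  calc y ^ (-r) - x ^ (-r) = y ^ (-r) * (1 - (x / y) ^ (-r)) := by
        rw [div_rpow hx.le hy.le]; field_simp
    _ ≤ y ^ (-r) * (r * (x / y - 1)) := by gcongr; linarith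
    _ = r * y ^ (-r - 1) * (x - y) := by rw [rpow_sub_one hy.ne']; field_simp

theorem sum_mul_le_of_eq_mul_rpow_neg_sub_one {ι : Type*} (s : Finset ι) {r c : ℝ} (hr : 0 < r)
    (hc : 0 ≤ c) {a b x y : ι → ℝ} (hb : ∀ k ∈ s, 0 ≤ b k) (hx : ∀ k ∈ s, 0 < x k)
    (hy : ∀ k ∈ s, 0 < y k) (ha : ∀ k ∈ s, a k = c * (b k * y k ^ (-r - 1)))
    (hxy : ∑ k ∈ s, b k * x k ^ (-r) = ∑ k ∈ s, b k * y k ^ (-r)) :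
    ∑ k ∈ s, a k * y k ≤ ∑ k ∈ s, a k * x k := by
  have tangent : ∀ k ∈ s, c / r * (b k * (y k ^ (-r) - x k ^ (-r))) ≤ a k * (x k - y k) := by
    intro k hk
    calc c / r * (b k * (y k ^ (-r) - x k ^ (-r)))
        ≤ c / r * (b k * (r * y k ^ (-r - 1) * (x k - y k))) := by
          gcongr
          · exact hb k hk
          · exact rpow_neg_sub_rpow_neg_le hr.le (hx k hk) (hy k hk)
      _ = a k * (x k - y k) := by rw [ha k hk]; field_simp
  have hzero : c / r * ∑ k ∈ s, b k * (y k ^ (-r) - x k ^ (-r)) = 0 := by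
    simp only [mul_sub, sum_sub_distrib, hxy, sub_self, mul_zero]
  have hsum := sum_le_sum tangent
  rw [← mul_sum, hzero] at hsum
  simp only [mul_sub, sum_sub_distrib] at hsum
  linarith

theorem mul_rpow_one_div_add_one_rpow_neg {r C a b : ℝ} (hr : r + 1 ≠ 0) (hC : 0 < C)
    (ha : 0 < a) (hb : 0 < b) :
    b * (C * (b / a) ^ (1 / (r + 1))) ^ (-r) = C ^ (-r) * (b * a ^ r) ^ (1 / (r + 1)) := by
  rw [mul_rpow hC.le (by positivity), ← rpow_mul (by positivity), mul_left_comm,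
    div_rpow hb.le ha.le, mul_rpow hb.le (by positivity), ← rpow_mul ha.le, mul_div_assoc',
    ← rpow_one_add' hb.le (by field_simp; simp [hr]), div_eq_mul_inv, ← rpow_neg ha.le]
  congr 3
  · field_simp; ring
  · ring

theorem mul_rpow_one_div_add_one_rpow_neg_sub_one {r C a b : ℝ} (hr : r + 1 ≠ 0) (hC : 0 < C)
    (ha : 0 < a) (hb : 0 < b) :
    b * (C * (b / a) ^ (1 / (r + 1))) ^ (-r - 1) = C ^ (-r - 1) * a := by
  rw [mul_rpow hC.le (by positivity), ← rpow_mul (by positivity),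
    show 1 / (r + 1) * (-r - 1) = -1 by field_simp; ring, rpow_neg_one, inv_div]
  field_simp

section PowerSchedule

variable {ι : Type*} [Fintype ι] {δbar r : ℝ} {a b : ι → ℝ}

noncomputable def powerScheduleScale (δbar r : ℝ) (a b : ι → ℝ) : ℝ :=
  δbar * ((∑ j, (b j * a j ^ r) ^ (1 / (r + 1))) / ∑ j, b j) ^ (1 / r)

noncomputable def powerSchedule (δbar r : ℝ) (a b : ι → ℝ) (k : ι) : ℝ :=
  powerScheduleScale δbar r a b * (b k / a k) ^ (1 / (r + 1))

theorem powerScheduleScale_pos [Nonempty ι] (hδbar : 0 < δbar) (ha : ∀ k, 0 < a k)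
    (hb : ∀ k, 0 < b k) : 0 < powerScheduleScale δbar r a b := by
  have hS : 0 < ∑ j, (b j * a j ^ r) ^ (1 / (r + 1)) :=
    sum_pos (fun j _ ↦ by have := ha j; have := hb j; positivity) univ_nonempty
  have hB : 0 < ∑ j, b j := sum_pos (fun j _ ↦ hb j) univ_nonempty
  unfold powerScheduleScale
  positivity

theorem powerSchedule_pos (hδbar : 0 < δbar) (ha : ∀ k, 0 < a k) (hb : ∀ k, 0 < b k) (k : ι) :
    0 < powerSchedule δbar r a b k := by
  have : Nonempty ι := ⟨k⟩
  have := powerScheduleScale_pos (r := r) hδbar ha hb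
  have := ha k
  have := hb k
  unfold powerSchedule
  positivity

theorem powerScheduleScale_rpow_neg (hr : 0 < r) (hδbar : 0 < δbar) (ha : ∀ k, 0 < a k)
    (hb : ∀ k, 0 < b k) :
    powerScheduleScale δbar r a b ^ (-r) =
      δbar ^ (-r) * (∑ j, b j) / ∑ j, (b j * a j ^ r) ^ (1 / (r + 1)) := by
  have hSB : 0 ≤ (∑ j, (b j * a j ^ r) ^ (1 / (r + 1))) / ∑ j, b j :=
    div_nonneg (sum_nonneg fun j _ ↦ by have := ha j; have := hb j; positivity)
      (sum_nonneg fun j _ ↦ (hb j).le)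
  rw [powerScheduleScale, mul_rpow hδbar.le (rpow_nonneg hSB _), ← rpow_mul hSB,
    show 1 / r * -r = -1 by field_simp, rpow_neg_one, inv_div, mul_div_assoc]

theorem sum_mul_powerSchedule_rpow_neg (hr : 0 < r) (hδbar : 0 < δbar) (ha : ∀ k, 0 < a k)
    (hb : ∀ k, 0 < b k) :
    ∑ k, b k * powerSchedule δbar r a b k ^ (-r) = (∑ k, b k) * δbar ^ (-r) := by
  rcases isEmpty_or_nonempty ι with hι | hι
  · simp
  have hS : 0 < ∑ j, (b j * a j ^ r) ^ (1 / (r + 1)) :=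
    sum_pos (fun j _ ↦ by have := ha j; have := hb j; positivity) univ_nonempty
  have hC := powerScheduleScale_pos (r := r) hδbar ha hb
  calc ∑ k, b k * powerSchedule δbar r a b k ^ (-r)
      = ∑ k, powerScheduleScale δbar r a b ^ (-r) * (b k * a k ^ r) ^ (1 / (r + 1)) :=
        sum_congr rfl fun k _ ↦
          mul_rpow_one_div_add_one_rpow_neg (by positivity) hC (ha k) (hb k)
    _ = powerScheduleScale δbar r a b ^ (-r) * ∑ k, (b k * a k ^ r) ^ (1 / (r + 1)) :=
        (mul_sum ..).symm
    _ = (∑ k, b k) * δbar ^ (-r) := by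
      rw [powerScheduleScale_rpow_neg hr hδbar ha hb]
      field_simp

theorem exists_lagrange_multiplier_powerSchedule (hr : 0 < r) (hδbar : 0 < δbar)
    (ha : ∀ k, 0 < a k) (hb : ∀ k, 0 < b k) :
    ∃ c, 0 ≤ c ∧ ∀ k, a k = c * (b k * powerSchedule δbar r a b k ^ (-r - 1)) := by
  rcases isEmpty_or_nonempty ι with hι | hι
  · exact ⟨0, le_rfl, fun k ↦ isEmptyElim k⟩
  have hC := powerScheduleScale_pos (r := r) hδbar ha hb
  refine ⟨powerScheduleScale δbar r a b ^ (r + 1), by positivity, fun k ↦ ?_⟩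
  rw [powerSchedule, mul_rpow_one_div_add_one_rpow_neg_sub_one (by positivity) hC (ha k) (hb k), ← mul_assoc,
    ← rpow_add hC, show r + 1 + (-r - 1) = 0 by ring, rpow_zero, one_mul]

end PowerSchedule

theorem closed_form_power_schedule_general
    (N : ℕ) (δbar m M r : ℝ)
    (hδbar : 0 < δbar) (hr : 0 < r)
    (a b : Fin N → ℝ) (ha : ∀ k, 0 < a k) (hb : ∀ k, 0 < b k)
    (δo : Fin N → ℝ)
    (hδo : ∀ k, δo k = δbar *
      ((∑ j, (b j * a j ^ r) ^ (1 / (r + 1))) / (∑ j, b j)) ^ (1 / r) *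
      (b k / a k) ^ (1 / (r + 1))) :
    -- δo is an optimal solution: it is feasible and minimizes the objective
    (∀ k, 0 < δo k) ∧
    (∑ k, b k * δo k ^ (-r) = (∑ k, b k) * δbar ^ (-r)) ∧
    (∀ δ : Fin N → ℝ,
      (∀ k, m * δbar ≤ δ k ∧ δ k ≤ M * δbar ∧ 0 < δ k) →
      (∑ k, b k * δ k ^ (-r) = (∑ k, b k) * δbar ^ (-r)) →
      ∑ k, a k * δo k ≤ ∑ k, a k * δ k) := by
  obtain rfl : δo = powerSchedule δbar r a b := funext hδo
  have hfeas := sum_mul_powerSchedule_rpow_neg hr hδbar ha hb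
  refine ⟨powerSchedule_pos hδbar ha hb, hfeas, fun δ hδ hbudget ↦ ?_⟩
  obtain ⟨c, hc, hstat⟩ := exists_lagrange_multiplier_powerSchedule hr hδbar ha hb
  exact sum_mul_le_of_eq_mul_rpow_neg_sub_one univ hr hc (fun k _ ↦ (hb k).le)
    (fun k _ ↦ (hδ k).2.2) (fun k _ ↦ powerSchedule_pos hδbar ha hb k) (fun k _ ↦ hstat k)
    (hbudget.trans hfeas.symm)

/-- Closed-form optimal schedule for power-type oracle costs (Corollary 3.7). -/
theorem closed_form_power_schedule
    (N : ℕ) (δbar m M r : ℝ)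
    (hδbar : 0 < δbar) (hm : 0 ≤ m) (hm1 : m < 1) (hM : 1 < M) (hr : 0 < r)
    (a b : Fin N → ℝ) (ha : ∀ k, 0 < a k) (hb : ∀ k, 0 < b k)
    (δo : Fin N → ℝ)
    (hδo : ∀ k, δo k = δbar *
      ((∑ j, (b j * a j ^ r) ^ (1 / (r + 1))) / (∑ j, b j)) ^ (1 / r) *
      (b k / a k) ^ (1 / (r + 1)))
    (hbounds : ∀ k, m * δbar ≤ δo k ∧ δo k ≤ M * δbar) :
    -- δo is an optimal solution: it is feasible and minimizes the objective
    (∀ k, 0 < δo k) ∧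
    (∑ k, b k * δo k ^ (-r) = (∑ k, b k) * δbar ^ (-r)) ∧
    (∀ δ : Fin N → ℝ,
      (∀ k, m * δbar ≤ δ k ∧ δ k ≤ M * δbar ∧ 0 < δ k) →
      (∑ k, b k * δ k ^ (-r) = (∑ k, b k) * δbar ^ (-r)) →
      ∑ k, a k * δo k ≤ ∑ k, a k * δ k) :=
  closed_form_power_schedule_general N δbar m M r hδbar hr a b ha hb δo hδo
end

section
/- Closed-form optimal work allocation (Corollary 3.10). Let N ∈ ℕ, r > 0, let a, b ∈ ℝ^N have strictly positive entries, and let 0 < ω_M < ω̄/N < ω_m. Consider the problem: minimize ∑_{k=0}^{N−1} a_k·(ω_k/b_k)^{−1/r} over vectors ω ∈ ℝ^N with ω_M ≤ ω_k ≤ ω_m for every k, subject to ∑_{k=0}^{N−1} ω_k = ω̄. Define the vector ω̊ by ω̊_k = ω̄ · (b_k a_k^r)^{1/(r+1)} / ∑_{j=0}^{N−1} (b_j a_j^r)^{1/(r+1)}. If ω_M ≤ ω̊_k ≤ ω_m for every k, then ω̊ is an optimal solution of this problem. -/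
open Real Finset

/-- Bernoulli-type inequality for nonpositive real exponents. -/
lemma bern_nonpos {x p : ℝ} (hx : 0 < x) (hp : p ≤ 0) :
    1 + p * (x - 1) ≤ x ^ p := by
  have h1 : Real.log x ≤ x - 1 := Real.log_le_sub_one_of_pos hx
  have h2 : p * (x - 1) ≤ p * Real.log x := mul_le_mul_of_nonpos_left h1 hp
  have h3 : Real.log x * p + 1 ≤ Real.exp (Real.log x * p) := Real.add_one_le_exp _
  rw [Real.rpow_def_of_pos hx]
  nlinarith

/-- Tangent-line inequality for `fun t => t ^ p` with `p ≤ 0` on `(0, ∞)`. -/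
lemma tangent_rpow {x y p : ℝ} (hx : 0 < x) (hy : 0 < y) (hp : p ≤ 0) :
    x ^ p + p * x ^ (p - 1) * (y - x) ≤ y ^ p := by
  have hq : (0:ℝ) < y / x := div_pos hy hx
  have h := bern_nonpos hq hp
  have hxp : (0:ℝ) < x ^ p := Real.rpow_pos_of_pos hx p
  have h2 : x ^ p * (1 + p * (y / x - 1)) ≤ x ^ p * (y / x) ^ p :=
    mul_le_mul_of_nonneg_left h hxp.le
  have h3 : x ^ p * (y / x) ^ p = y ^ p := by
    rw [Real.div_rpow hy.le hx.le]
    field_simp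
  have h4 : x ^ (p - 1) = x ^ p / x := by
    rw [Real.rpow_sub hx, Real.rpow_one]
  rw [h3] at h2
  rw [h4]
  calc x ^ p + p * (x ^ p / x) * (y - x)
      = x ^ p * (1 + p * (y / x - 1)) := by field_simp
    _ ≤ y ^ p := h2

/-- Closed-form optimal work allocation (Corollary 3.10). -/
theorem closed_form_work_allocation
    (N : ℕ) (r ωM ωm ωbar : ℝ) (hr : 0 < r)
    (a b : Fin N → ℝ) (ha : ∀ k, 0 < a k) (hb : ∀ k, 0 < b k)
    (hωM : 0 < ωM) (h1 : ωM < ωbar / N) (h2 : ωbar / N < ωm)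
    (ωo : Fin N → ℝ)
    (hωo : ∀ k, ωo k = ωbar * (b k * a k ^ r) ^ (1 / (r + 1)) /
      (∑ j, (b j * a j ^ r) ^ (1 / (r + 1))))
    (hbounds : ∀ k, ωM ≤ ωo k ∧ ωo k ≤ ωm) :
    -- ωo is an optimal solution: it is feasible and minimizes the objective
    (∑ k, ωo k = ωbar) ∧
    (∀ ω : Fin N → ℝ,
      (∀ k, ωM ≤ ω k ∧ ω k ≤ ωm) →
      (∑ k, ω k = ωbar) →
      ∑ k, a k * (ωo k / b k) ^ (-(1 / r)) ≤
        ∑ k, a k * (ω k / b k) ^ (-(1 / r))) := by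
  have hN : 0 < N := by
    rcases Nat.eq_zero_or_pos N with h | h
    · exfalso; subst h; simp at h1; linarith
    · exact h
  have hNR : (0:ℝ) < N := by exact_mod_cast hN
  have hωbar : 0 < ωbar := by
    have h0 : 0 < ωbar / N := hωM.trans h1
    have hc := div_mul_cancel₀ ωbar hNR.ne'
    nlinarith
  set p : ℝ := -(1 / r) with hpdef
  have hp : p < 0 := by
    have : (0:ℝ) < 1 / r := by positivity
    simp only [hpdef]; linarith
  set S : ℝ := ∑ j, (b j * a j ^ r) ^ (1 / (r + 1)) with hSdef
  have hcpos : ∀ k : Fin N, (0:ℝ) < (b k * a k ^ r) ^ (1 / (r + 1)) := fun k =>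
    Real.rpow_pos_of_pos (mul_pos (hb k) (Real.rpow_pos_of_pos (ha k) r)) _
  have hS : 0 < S := Finset.sum_pos (fun k _ => hcpos k)
    (Finset.univ_nonempty_iff.mpr ⟨⟨0, hN⟩⟩)
  have hr1 : (0:ℝ) < r + 1 := by linarith
  -- feasibility sum
  have hsumωo : ∑ k, ωo k = ωbar := by
    calc ∑ k, ωo k = ∑ k, ωbar * (b k * a k ^ r) ^ (1 / (r + 1)) / S := by
          exact Finset.sum_congr rfl fun k _ => hωo k
      _ = ωbar * S / S := by rw [hSdef, ← Finset.sum_div, ← Finset.mul_sum]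
      _ = ωbar := by field_simp
  refine ⟨hsumωo, ?_⟩
  intro ω hbnd hsum
  have hωpos : ∀ k, 0 < ω k := fun k => lt_of_lt_of_le hωM (hbnd k).1
  have hωopos : ∀ k, 0 < ωo k := fun k => lt_of_lt_of_le hωM (hbounds k).1
  -- key identity: the multiplier is constant across coordinates
  have hkey : ∀ k, a k / b k * (ωo k / b k) ^ (p - 1) = (ωbar / S) ^ (p - 1) := by
    intro k
    have hA := ha k; have hB := hb k
    have hAr : (0:ℝ) < a k ^ r := Real.rpow_pos_of_pos hA r
    have hBA : (0:ℝ) < b k * a k ^ r := mul_pos hB hAr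
    have hxk : ωo k / b k = (ωbar / S) * ((b k * a k ^ r) ^ (1 / (r + 1)) / b k) := by
      rw [hωo k]; field_simp
    have e1 : ((b k * a k ^ r) ^ (1 / (r + 1))) ^ (p - 1)
        = (b k * a k ^ r) ^ (-(1 / r)) := by
      rw [← Real.rpow_mul hBA.le]
      congr 1
      simp only [hpdef]
      field_simp
      ring
    have e2 : (b k * a k ^ r) ^ (-(1 / r)) = b k ^ (-(1 / r)) * (a k)⁻¹ := by
      rw [Real.mul_rpow hB.le hAr.le, ← Real.rpow_mul hA.le]
      have hexp : r * -(1 / r) = -1 := by field_simp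
      rw [hexp, Real.rpow_neg_one]
    have e3 : b k ^ (-(1 / r)) / b k ^ (p - 1) = b k := by
      rw [← Real.rpow_sub hB]
      have hexp : -(1 / r) - (p - 1) = 1 := by simp only [hpdef]; ring
      rw [hexp, Real.rpow_one]
    have hcb : ((b k * a k ^ r) ^ (1 / (r + 1)) / b k) ^ (p - 1) = b k / a k := by
      rw [Real.div_rpow (hcpos k).le hB.le, e1, e2]
      rw [mul_div_right_comm, e3]
      rw [mul_comm, ← div_eq_inv_mul]
    rw [hxk, Real.mul_rpow (by positivity) (by positivity), hcb]
    field_simp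
  -- pointwise tangent inequality scaled by a k
  have hpoint : ∀ k : Fin N,
      a k * (ωo k / b k) ^ p + p * (ωbar / S) ^ (p - 1) * (ω k - ωo k)
        ≤ a k * (ω k / b k) ^ p := by
    intro k
    have hA := ha k; have hB := hb k
    have hx : (0:ℝ) < ωo k / b k := div_pos (hωopos k) hB
    have hy : (0:ℝ) < ω k / b k := div_pos (hωpos k) hB
    have ht := tangent_rpow hx hy hp.le
    have h2 := mul_le_mul_of_nonneg_left ht hA.le
    have heq : a k * ((ωo k / b k) ^ p
          + p * (ωo k / b k) ^ (p - 1) * (ω k / b k - ωo k / b k))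
        = a k * (ωo k / b k) ^ p + p * (ωbar / S) ^ (p - 1) * (ω k - ωo k) := by
      rw [← hkey k]
      field_simp
    rw [← heq]
    exact mul_le_mul_of_nonneg_left ht hA.le
  -- sum up
  have hsum2 : ∑ k, (a k * (ωo k / b k) ^ p + p * (ωbar / S) ^ (p - 1) * (ω k - ωo k))
      ≤ ∑ k, a k * (ω k / b k) ^ p := Finset.sum_le_sum fun k _ => hpoint k
  have hzero : ∑ k, p * (ωbar / S) ^ (p - 1) * (ω k - ωo k) = 0 := by
    rw [← Finset.mul_sum, Finset.sum_sub_distrib, hsum, hsumωo, sub_self, mul_zero]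
  calc ∑ k, a k * (ωo k / b k) ^ p
      = ∑ k, (a k * (ωo k / b k) ^ p + p * (ωbar / S) ^ (p - 1) * (ω k - ωo k)) := by
        rw [Finset.sum_add_distrib, hzero, add_zero]
    _ ≤ ∑ k, a k * (ω k / b k) ^ p := hsum2
end

section
/- Closed-form optimal schedule with cut-offs for logarithmic costs (Theorem A.1, case r = 0). Let N ∈ ℕ, δ̄ > 0, 0 < m < 1 < M with M·δ̄ ≤ 1, and let a, b ∈ ℝ^N have strictly positive entries. Consider the master problem: minimize ∑_{k=0}^{N−1} a_k δ_k over δ with m·δ̄ ≤ δ_k ≤ M·δ̄ for every k, subject to ∑_{k=0}^{N−1} b_k·(−log δ_k) = (∑_{k=0}^{N−1} b_k)·(−log δ̄). Assume the non-degeneracy condition: for no subset S ⊆ {0,…,N−1} does (−log(M·δ̄))·∑_{k∈S} b_k + (−log(m·δ̄))·∑_{k∉S} b_k = (∑_{k=0}^{N−1} b_k)·(−log δ̄). Then there exist integers N⊕, N⊖ ≥ 0 with N⊕ + N⊖ ≤ N−1 and a bijection ρ of {0,…,N−1} with ρ(k₁) < ρ(k₂) implying b_{k₁}/a_{k₁}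 ≥ b_{k₂}/a_{k₂}, such that, writing ⊕ = {k : ρ(k) < N⊕}, ⊖ = {k : ρ(k) > N−1−N⊖}, T = {k : N⊕ ≤ ρ(k) ≤ N−1−N⊖}, and λ̂ = δ̄ · [ M^{∑_{k∈⊕} b_k} · m^{∑_{k∈⊖} b_k} · ∏_{k∈T} (b_k/a_k)^{b_k} ]^{−1/∑_{k∈T} b_k}, the vector δ* given by δ*_k = M·δ̄ for k ∈ ⊕, δ*_k = λ̂·(b_k/a_k) for k ∈ T, and δ*_k = m·δ̄ for k ∈ ⊖, is an optimal solution of the master problem, with λ̂ > 0. -/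
/-!
With `ν_k = b_k / a_k`, the clipped schedule `δ*_k = max (m δ̄) (min (M δ̄) (λ ν_k))` minimises
each term `a_k δ_k - λ b_k log δ_k` of the Lagrangian over the box, hence is optimal among all
feasible schedules with the same logarithmic budget; `λ` is chosen by the intermediate value
theorem so that `δ*` meets the budget. Non-degeneracy forces some `λ ν_k` into the box, so the
unclipped block is nonempty; after sorting by `ν`, the coordinates clipped at `M δ̄` and at `m δ̄`
form an initial and a final segment of ranks, and taking logarithms in the budget equation yields
the closed form of `λ`.
-/

open Finset

/-- `t ↦ t - x log t` is convex with its minimum at `x`, so on `[lo, hi]` it is minimal at the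
projection of `x`. -/
theorem clip_sub_mul_log_le {lo hi x t : ℝ} (hlo : 0 < lo) (hx : 0 ≤ x) (ht : t ∈ Set.Icc lo hi) :
    max lo (min hi x) - x * Real.log (max lo (min hi x)) ≤ t - x * Real.log t := by
  set s := max lo (min hi x)
  have hs : 0 < s := hlo.trans_le (le_max_left _ _)
  have htpos : 0 < t := hlo.trans_le ht.1
  have htangent : x * (Real.log t - Real.log s) ≤ x / s * (t - s) := by
    have h := Real.log_le_sub_one_of_pos (div_pos htpos hs)
    rw [Real.log_div htpos.ne' hs.ne'] at h
    calc x * (Real.log t - Real.log s) ≤ x * (t / s - 1) := mul_le_mul_of_nonneg_left h hx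
      _ = x / s * (t - s) := by field_simp
  have hsign : 0 ≤ (1 - x / s) * (t - s) := by
    rcases le_total x lo with hxlo | hlox
    · have hs_eq : s = lo := max_eq_left (min_le_of_right_le hxlo)
      rw [hs_eq] at hs ⊢
      exact mul_nonneg (by rw [sub_nonneg, div_le_one hs]; exact hxlo) (by linarith [ht.1])
    rcases le_total hi x with hhix | hxhi
    · have hs_eq : s = hi := by
        simp only [s, min_eq_left hhix, max_eq_right_iff.mpr (ht.1.trans ht.2)]
      rw [hs_eq] at hs ⊢
      exact mul_nonneg_of_nonpos_of_nonpos (by rw [sub_nonpos, one_le_div hs]; exact hhix)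
        (by linarith [ht.2])
    · have hs_eq : s = x := by simp only [s, min_eq_right hxhi, max_eq_right hlox]
      rw [hs_eq, div_self (hlo.trans_le hlox).ne', sub_self, zero_mul]
  linear_combination htangent + hsign

theorem sum_mul_clip_le_of_log_balance {ι : Type*} [Fintype ι] {a b δ : ι → ℝ} {lo hi lam : ℝ}
    (ha : ∀ k, 0 < a k) (hb : ∀ k, 0 ≤ b k) (hlam : 0 ≤ lam) (hlo : 0 < lo)
    (hδ : ∀ k, δ k ∈ Set.Icc lo hi)
    (hbal : ∑ k, b k * -Real.log (max lo (min hi (lam * (b k / a k)))) =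
      ∑ k, b k * -Real.log (δ k)) :
    ∑ k, a k * max lo (min hi (lam * (b k / a k))) ≤ ∑ k, a k * δ k := by
  have hpointwise : ∀ k, a k * max lo (min hi (lam * (b k / a k))) -
      lam * (b k * Real.log (max lo (min hi (lam * (b k / a k))))) ≤
      a k * δ k - lam * (b k * Real.log (δ k)) := by
    intro k
    have h := mul_le_mul_of_nonneg_left
      (clip_sub_mul_log_le hlo (mul_nonneg hlam (div_nonneg (hb k) (ha k).le)) (hδ k)) (ha k).le
    have hab : a k * (lam * (b k / a k)) = lam * b k := by field_simp [(ha k).ne']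
    linear_combination h + (Real.log (max lo (min hi (lam * (b k / a k)))) - Real.log (δ k)) * hab
  have hsum := sum_le_sum fun k (_ : k ∈ univ) => hpointwise k
  simp only [sum_sub_distrib, ← mul_sum] at hsum
  simp only [mul_neg, sum_neg_distrib, neg_inj] at hbal
  linear_combination hsum + lam * hbal

theorem exists_pos_log_balance_clip {ι : Type*} [Fintype ι] [Nonempty ι] {b ν : ι → ℝ}
    {lo hi c : ℝ} (hν : ∀ k, 0 < ν k) (hb : 0 ≤ ∑ k, b k) (hlo : 0 < lo) (hloc : lo ≤ c)
    (hchi : c ≤ hi) :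
    ∃ lam, 0 < lam ∧
      ∑ k, b k * -Real.log (max lo (min hi (lam * ν k))) = (∑ k, b k) * -Real.log c := by
  set g : ℝ → ℝ := fun lam => ∑ k, b k * -Real.log (max lo (min hi (lam * ν k)))
  have hg : Continuous g := by
    refine continuous_finsetSum _ fun k _ => continuous_const.mul (Continuous.neg ?_)
    exact (continuous_const.max (continuous_const.min (continuous_mul_const _))).log
      fun _ => (hlo.trans_le (le_max_left _ _)).ne'
  obtain ⟨kmax, hkmax⟩ := Finite.exists_max ν
  obtain ⟨kmin, hkmin⟩ := Finite.exists_min ν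
  have hg_small : g (lo / ν kmax) = (∑ k, b k) * -Real.log lo := by
    rw [sum_mul]
    refine sum_congr rfl fun k _ => ?_
    have : lo / ν kmax * ν k ≤ lo := by
      rw [div_mul_eq_mul_div, div_le_iff₀ (hν kmax)]
      exact mul_le_mul_of_nonneg_left (hkmax k) hlo.le
    rw [max_eq_left (min_le_of_right_le this)]
  have hg_large : g (hi / ν kmin) = (∑ k, b k) * -Real.log hi := by
    rw [sum_mul]
    refine sum_congr rfl fun k _ => ?_
    have : hi ≤ hi / ν kmin * ν k := by
      rw [div_mul_eq_mul_div, le_div_iff₀ (hν kmin)]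
      exact mul_le_mul_of_nonneg_left (hkmin k) (hlo.le.trans (hloc.trans hchi))
    rw [min_eq_left this, max_eq_right (hloc.trans hchi)]
  have hc : (∑ k, b k) * -Real.log c ∈ Set.uIcc (g (lo / ν kmax)) (g (hi / ν kmin)) := by
    rw [hg_small, hg_large]
    refine Set.mem_uIcc.mpr (Or.inr ⟨?_, ?_⟩) <;>
      refine mul_le_mul_of_nonneg_left (neg_le_neg (Real.log_le_log ?_ ?_)) hb <;>
      linarith
  obtain ⟨lam, hlam, hglam⟩ := intermediate_value_uIcc hg.continuousOn hc
  exact ⟨lam, (lt_inf_iff.mpr ⟨div_pos hlo (hν kmax),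
    div_pos (hlo.trans_le (hloc.trans hchi)) (hν kmin)⟩).trans_le hlam.1, hglam⟩

theorem exists_perm_rank_antitone {N : ℕ} {α : Type*} [LinearOrder α] (x : Fin N → α) :
    ∃ ρ : Equiv.Perm (Fin N), ∀ k₁ k₂, ρ k₁ < ρ k₂ → x k₂ ≤ x k₁ := by
  refine ⟨(Tuple.sort (OrderDual.toDual ∘ x))⁻¹, fun k₁ k₂ h => ?_⟩
  simpa [Equiv.Perm.inv_def] using Tuple.monotone_sort (OrderDual.toDual ∘ x) h.le

theorem mem_iff_rank_lt_card {N : ℕ} (ρ : Equiv.Perm (Fin N)) {A : Finset (Fin N)}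
    (hA : ∀ k₁ k₂, ρ k₁ < ρ k₂ → k₂ ∈ A → k₁ ∈ A) (k : Fin N) :
    k ∈ A ↔ (ρ k : ℕ) < #A := by
  have hA' : ∀ k₁ k₂, ρ k₁ ≤ ρ k₂ → k₂ ∈ A → k₁ ∈ A := fun k₁ k₂ h hk₂ =>
    h.lt_or_eq.elim (hA k₁ k₂ · hk₂) fun h => ρ.injective h ▸ hk₂
  constructor
  · intro hk
    have hsub : Iic (ρ k) ⊆ A.map ρ.toEmbedding := fun i hi =>
      mem_map_equiv.mpr (hA' _ k (by simpa using mem_Iic.mp hi) hk)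
    simpa using card_le_card hsub
  · intro hlt
    by_contra hk
    have hsub : A.map ρ.toEmbedding ⊆ Iio (ρ k) := by
      intro i hi
      obtain ⟨j, hj, rfl⟩ := mem_map.mp hi
      exact mem_Iio.mpr (lt_of_not_ge fun hle => hk (hA' k j hle hj))
    have := card_le_card hsub
    rw [card_map, Fin.card_Iio] at this
    omega

theorem mem_iff_card_sub_le_rank {N : ℕ} (ρ : Equiv.Perm (Fin N)) {A : Finset (Fin N)}
    (hA : ∀ k₁ k₂, ρ k₁ < ρ k₂ → k₁ ∈ A → k₂ ∈ A) (k : Fin N) :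
    k ∈ A ↔ N - #A ≤ (ρ k : ℕ) := by
  have h := mem_iff_rank_lt_card ρ (A := Aᶜ)
    (fun k₁ k₂ h hk₂ => mem_compl.mpr fun hk₁ => mem_compl.mp hk₂ (hA k₁ k₂ h hk₁)) k
  rw [mem_compl, card_compl, Fintype.card_fin] at h
  rw [← not_lt, ← h, not_not]

theorem exists_rank_cutoffs {N : ℕ} {α : Type*} [LinearOrder α] (ρ : Equiv.Perm (Fin N))
    {x : Fin N → α} (hρ : ∀ k₁ k₂, ρ k₁ < ρ k₂ → x k₂ ≤ x k₁) {lo hi : α}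
    (hmid : ∃ k, x k ∈ Set.Icc lo hi) :
    ∃ Nplus Nminus : ℕ, Nplus + Nminus ≤ N - 1 ∧
      ∀ k, ((ρ k : ℕ) < Nplus ↔ hi < x k) ∧ (N - 1 - Nminus < (ρ k : ℕ) ↔ x k < lo) := by
  classical
  obtain ⟨k₀, hk₀⟩ := hmid
  set P := univ.filter fun k => hi < x k
  set Q := univ.filter fun k => x k < lo
  have hP := mem_iff_rank_lt_card ρ (A := P) fun k₁ k₂ h hk₂ => by
    simp only [P, mem_filter, mem_univ, true_and] at hk₂ ⊢
    exact hk₂.trans_le (hρ k₁ k₂ h)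
  have hQ := mem_iff_card_sub_le_rank ρ (A := Q) fun k₁ k₂ h hk₁ => by
    simp only [Q, mem_filter, mem_univ, true_and] at hk₁ ⊢
    exact (hρ k₁ k₂ h).trans_lt hk₁
  have hcard : #P + #Q ≤ N - 1 := by
    have hdisj : Disjoint P Q := disjoint_filter.mpr fun k _ hhi hlo =>
      absurd (hhi.trans hlo) (not_lt.mpr (hk₀.1.trans hk₀.2))
    have hsub : P ∪ Q ⊆ univ.erase k₀ := fun k hk => by
      refine mem_erase.mpr ⟨?_, mem_univ k⟩
      rintro rfl
      simp only [P, Q, mem_union, mem_filter, mem_univ, true_and] at hk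
      exact hk.elim (not_lt.mpr hk₀.2) (not_lt.mpr hk₀.1)
    simpa [card_union_of_disjoint hdisj] using card_le_card hsub
  refine ⟨#P, #Q, hcard, fun k => ⟨?_, ?_⟩⟩
  · simpa [P] using (hP k).symm
  · have := k.pos
    simpa [Q, show N - 1 - #Q < (ρ k : ℕ) ↔ N - #Q ≤ ρ k by omega] using (hQ k).symm

theorem exists_rank_cutoffs_max_min {N : ℕ} {α : Type*} [LinearOrder α]
    (ρ : Equiv.Perm (Fin N)) {x : Fin N → α} (hρ : ∀ k₁ k₂, ρ k₁ < ρ k₂ → x k₂ ≤ x k₁)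
    {lo hi : α} (hmid : ∃ k, x k ∈ Set.Icc lo hi) :
    ∃ Nplus Nminus : ℕ, Nplus + Nminus ≤ N - 1 ∧
      (∃ k, Nplus ≤ (ρ k : ℕ) ∧ (ρ k : ℕ) ≤ N - 1 - Nminus) ∧
      (∀ k, (ρ k : ℕ) < Nplus → max lo (min hi (x k)) = hi) ∧
      (∀ k, Nplus ≤ (ρ k : ℕ) → (ρ k : ℕ) ≤ N - 1 - Nminus → max lo (min hi (x k)) = x k) ∧
      (∀ k, N - 1 - Nminus < (ρ k : ℕ) → max lo (min hi (x k)) = lo) := by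
  obtain ⟨k₀, hk₀⟩ := hmid
  obtain ⟨Nplus, Nminus, hcard, hcut⟩ := exists_rank_cutoffs ρ hρ ⟨k₀, hk₀⟩
  refine ⟨Nplus, Nminus, hcard, ⟨k₀, ?_, ?_⟩, fun k hk => ?_, fun k h₁ h₂ => ?_, fun k hk => ?_⟩
  · exact not_lt.mp ((hcut k₀).1.not.mpr (not_lt.mpr hk₀.2))
  · exact not_lt.mp ((hcut k₀).2.not.mpr (not_lt.mpr hk₀.1))
  · rw [min_eq_left ((hcut k).1.mp hk).le, max_eq_right (hk₀.1.trans hk₀.2)]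
  · rw [min_eq_right (not_lt.mp ((hcut k).1.not.mp h₁.not_gt)),
      max_eq_right (not_lt.mp ((hcut k).2.not.mp h₂.not_gt))]
  · exact max_eq_left (min_le_of_right_le ((hcut k).2.mp hk).le)

theorem exists_mem_Icc_of_log_balance {ι : Type*} [Fintype ι] [DecidableEq ι] {b x : ι → ℝ}
    {lo hi C : ℝ} (hlohi : lo ≤ hi)
    (hnondeg : ¬ ∃ S : Finset ι,
      (-Real.log hi) * ∑ k ∈ S, b k + (-Real.log lo) * ∑ k ∈ Sᶜ, b k = C)
    (hbal : ∑ k, b k * -Real.log (max lo (min hi (x k))) = C) :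
    ∃ k, x k ∈ Set.Icc lo hi := by
  by_contra! hout
  refine hnondeg ⟨univ.filter (hi < x ·), ?_⟩
  rw [← hbal, compl_filter, mul_sum, mul_sum, ← sum_filter_add_sum_filter_not univ (hi < x ·)]
  congr 1 <;> refine sum_congr rfl fun k hk => ?_ <;> rw [mem_filter] at hk
  · rw [min_eq_left hk.2.le, max_eq_right hlohi, mul_comm]
  · have hxlo : x k < lo := lt_of_not_ge fun h => hout k ⟨h, not_lt.mp hk.2⟩
    rw [max_eq_left (min_le_of_right_le hxlo.le), mul_comm]

theorem sum_eq_sum_filter_add_sum_filter_add_sum_filter {ι M : Type*} [AddCommMonoid M]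
    (s : Finset ι) (f : ι → M) (p q : ι → Prop) [DecidablePred p] [DecidablePred q]
    (hpq : ∀ k, q k → ¬ p k) :
    ∑ k ∈ s, f k = ∑ k ∈ s.filter p, f k + ∑ k ∈ s.filter q, f k +
      ∑ k ∈ s.filter (fun k => ¬ p k ∧ ¬ q k), f k := by
  rw [← sum_filter_add_sum_filter_not s p, ← sum_filter_add_sum_filter_not (s.filter (¬ p ·)) q,
    filter_filter, filter_filter, add_assoc,
    filter_congr fun k _ => (and_iff_right_of_imp (hpq k)).trans Iff.rfl]

theorem eq_mul_rpow_of_log_balance {ι : Type*} [Fintype ι] (p q : ι → Prop) [DecidablePred p]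
    [DecidablePred q] (hpq : ∀ k, q k → ¬ p k) {b ν δ : ι → ℝ} {M m δbar lam : ℝ}
    (hM : 0 < M) (hm : 0 < m) (hδbar : 0 < δbar) (hlam : 0 < lam) (hν : ∀ k, 0 < ν k)
    (hδp : ∀ k, p k → δ k = M * δbar) (hδq : ∀ k, q k → δ k = m * δbar)
    (hδT : ∀ k, ¬ p k → ¬ q k → δ k = lam * ν k)
    (hBT : 0 < ∑ k ∈ univ.filter (fun k => ¬ p k ∧ ¬ q k), b k)
    (hbal : ∑ k, b k * -Real.log (δ k) = (∑ k, b k) * -Real.log δbar) :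
    lam = δbar * (M ^ (∑ k ∈ univ.filter p, b k) * m ^ (∑ k ∈ univ.filter q, b k) *
      ∏ k ∈ univ.filter (fun k => ¬ p k ∧ ¬ q k), ν k ^ b k) ^
      (-(1 / ∑ k ∈ univ.filter (fun k => ¬ p k ∧ ¬ q k), b k)) := by
  have hsplit := fun f : ι → ℝ => sum_eq_sum_filter_add_sum_filter_add_sum_filter univ f p q hpq
  set P := univ.filter p
  set Q := univ.filter q
  set T := univ.filter (fun k => ¬ p k ∧ ¬ q k)
  have hP : ∑ k ∈ P, b k * -Real.log (δ k) = -(Real.log M + Real.log δbar) * ∑ k ∈ P, b k := by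
    rw [mul_sum]
    refine sum_congr rfl fun k hk => ?_
    rw [hδp k (mem_filter.mp hk).2, Real.log_mul hM.ne' hδbar.ne']
    ring
  have hQ : ∑ k ∈ Q, b k * -Real.log (δ k) = -(Real.log m + Real.log δbar) * ∑ k ∈ Q, b k := by
    rw [mul_sum]
    refine sum_congr rfl fun k hk => ?_
    rw [hδq k (mem_filter.mp hk).2, Real.log_mul hm.ne' hδbar.ne']
    ring
  have hT : ∑ k ∈ T, b k * -Real.log (δ k) =
      -(Real.log lam * ∑ k ∈ T, b k + ∑ k ∈ T, b k * Real.log (ν k)) := by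
    rw [mul_sum, ← sum_add_distrib, ← sum_neg_distrib]
    refine sum_congr rfl fun k hk => ?_
    rw [hδT k (mem_filter.mp hk).2.1 (mem_filter.mp hk).2.2, Real.log_mul hlam.ne' (hν k).ne']
    ring
  have hK : Real.log (M ^ (∑ k ∈ P, b k) * m ^ (∑ k ∈ Q, b k) * ∏ k ∈ T, ν k ^ b k) =
      (∑ k ∈ P, b k) * Real.log M + (∑ k ∈ Q, b k) * Real.log m +
        ∑ k ∈ T, b k * Real.log (ν k) := by
    rw [Real.log_mul (by positivity) (prod_pos fun k _ => (Real.rpow_pos_of_pos (hν k) _)).ne',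
      Real.log_mul (by positivity) (by positivity), Real.log_rpow hM, Real.log_rpow hm,
      Real.log_prod fun k _ => (Real.rpow_pos_of_pos (hν k) _).ne']
    simp only [Real.log_rpow (hν _)]
  rw [hsplit, hsplit, hP, hQ, hT] at hbal
  refine Real.log_injOn_pos hlam (mul_pos hδbar (Real.rpow_pos_of_pos ?_ _)) ?_
  · exact mul_pos (by positivity) (prod_pos fun k _ => Real.rpow_pos_of_pos (hν k) _)
  rw [Real.log_mul hδbar.ne' (Real.rpow_pos_of_pos ?_ _).ne', Real.log_rpow ?_, hK]
  · field_simp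
    linear_combination -hbal
  all_goals exact mul_pos (by positivity) (prod_pos fun k _ => Real.rpow_pos_of_pos (hν k) _)

theorem closed_form_log_schedule_cutoff_general
    (N : ℕ) (δbar m M : ℝ)
    (hδbar : 0 < δbar) (hm : 0 < m) (hm1 : m < 1) (hM : 1 < M)
    (a b : Fin N → ℝ) (ha : ∀ k, 0 < a k) (hb : ∀ k, 0 < b k)
    (hnondeg : ¬ ∃ S : Finset (Fin N),
      (-Real.log (M * δbar)) * ∑ k ∈ S, b k +
        (-Real.log (m * δbar)) * ∑ k ∈ Sᶜ, b k
      = (∑ k, b k) * (-Real.log δbar)) :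
    ∃ Nplus Nminus : ℕ, Nplus + Nminus ≤ N - 1 ∧
    ∃ ρ : Equiv.Perm (Fin N),
      (∀ k₁ k₂ : Fin N, ρ k₁ < ρ k₂ → b k₂ / a k₂ ≤ b k₁ / a k₁) ∧
      ∃ lam : ℝ,
        lam = δbar *
          (M ^ (∑ k ∈ univ.filter (fun k => (ρ k : ℕ) < Nplus), b k) *
           m ^ (∑ k ∈ univ.filter (fun k => N - 1 - Nminus < (ρ k : ℕ)), b k) *
           ∏ k ∈ univ.filter
              (fun k => Nplus ≤ (ρ k : ℕ) ∧ (ρ k : ℕ) ≤ N - 1 - Nminus),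
              (b k / a k) ^ (b k)) ^
          (-(1 / ∑ k ∈ univ.filter
              (fun k => Nplus ≤ (ρ k : ℕ) ∧ (ρ k : ℕ) ≤ N - 1 - Nminus), b k)) ∧
        0 < lam ∧
        ∃ δstar : Fin N → ℝ,
          (∀ k, (ρ k : ℕ) < Nplus → δstar k = M * δbar) ∧
          (∀ k, Nplus ≤ (ρ k : ℕ) → (ρ k : ℕ) ≤ N - 1 - Nminus →
            δstar k = lam * (b k / a k)) ∧
          (∀ k, N - 1 - Nminus < (ρ k : ℕ) → δstar k = m * δbar) ∧
          -- δstar is an optimal solution of the master problem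
          (∀ k, m * δbar ≤ δstar k ∧ δstar k ≤ M * δbar) ∧
          (∑ k, b k * (-Real.log (δstar k)) = (∑ k, b k) * (-Real.log δbar)) ∧
          (∀ δ : Fin N → ℝ,
            (∀ k, m * δbar ≤ δ k ∧ δ k ≤ M * δbar) →
            (∑ k, b k * (-Real.log (δ k)) = (∑ k, b k) * (-Real.log δbar)) →
            ∑ k, a k * δstar k ≤ ∑ k, a k * δ k) := by
  have hν : ∀ k, 0 < b k / a k := fun k => div_pos (hb k) (ha k)
  have hlo : 0 < m * δbar := mul_pos hm hδbar
  have hloδ : m * δbar ≤ δbar := mul_le_of_le_one_left hδbar.le hm1.le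
  have hδhi : δbar ≤ M * δbar := le_mul_of_one_le_left hδbar.le hM.le
  have : Nonempty (Fin N) := by
    refine ⟨⟨0, Nat.pos_of_ne_zero fun hN => hnondeg ⟨∅, ?_⟩⟩⟩
    subst hN
    simp
  obtain ⟨lam, hlam, hbal⟩ := exists_pos_log_balance_clip (b := b) hν
    (sum_nonneg fun k _ => (hb k).le) hlo hloδ hδhi
  obtain ⟨ρ, hρ⟩ := exists_perm_rank_antitone fun k => b k / a k
  obtain ⟨Nplus, Nminus, hcard, ⟨k₀, hk₀⟩, hδP, hδT, hδQ⟩ :=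
    exists_rank_cutoffs_max_min ρ (x := fun k => lam * (b k / a k))
      (fun k₁ k₂ h => mul_le_mul_of_nonneg_left (hρ k₁ k₂ h) hlam.le)
      (exists_mem_Icc_of_log_balance (hloδ.trans hδhi) hnondeg hbal)
  have hBT : 0 < ∑ k ∈ univ.filter (fun k => ¬ (ρ k : ℕ) < Nplus ∧ ¬ N - 1 - Nminus < (ρ k : ℕ)),
      b k :=
    sum_pos (fun k _ => hb k) ⟨k₀, by simpa only [mem_filter, mem_univ, true_and, not_lt] using hk₀⟩
  refine ⟨Nplus, Nminus, hcard, ρ, hρ, lam, ?_, hlam, _, hδP, hδT, hδQ,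
    fun k => ⟨le_max_left _ _, max_le (hloδ.trans hδhi) (min_le_left _ _)⟩, hbal,
    fun δ hδ hδbal => sum_mul_clip_le_of_log_balance ha (fun k => (hb k).le) hlam.le hlo hδ
      (hbal.trans hδbal.symm)⟩
  simpa only [not_lt] using eq_mul_rpow_of_log_balance _ _ (fun k h₁ h₂ => by omega)
    (zero_lt_one.trans hM) hm hδbar hlam hν hδP hδQ
    (fun k h₁ h₂ => hδT k (not_lt.mp h₁) (not_lt.mp h₂)) hBT hbal

/-- Closed-form optimal schedule with cut-offs for logarithmic costs
(Theorem A.1, case r = 0). -/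
theorem closed_form_log_schedule_cutoff
    (N : ℕ) (δbar m M : ℝ)
    (hδbar : 0 < δbar) (hm : 0 < m) (hm1 : m < 1) (hM : 1 < M)
    (hMδ : M * δbar ≤ 1)
    (a b : Fin N → ℝ) (ha : ∀ k, 0 < a k) (hb : ∀ k, 0 < b k)
    (hnondeg : ¬ ∃ S : Finset (Fin N),
      (-Real.log (M * δbar)) * ∑ k ∈ S, b k +
        (-Real.log (m * δbar)) * ∑ k ∈ Sᶜ, b k
      = (∑ k, b k) * (-Real.log δbar)) :
    ∃ Nplus Nminus : ℕ, Nplus + Nminus ≤ N - 1 ∧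
    ∃ ρ : Equiv.Perm (Fin N),
      (∀ k₁ k₂ : Fin N, ρ k₁ < ρ k₂ → b k₂ / a k₂ ≤ b k₁ / a k₁) ∧
      ∃ lam : ℝ,
        lam = δbar *
          (M ^ (∑ k ∈ univ.filter (fun k => (ρ k : ℕ) < Nplus), b k) *
           m ^ (∑ k ∈ univ.filter (fun k => N - 1 - Nminus < (ρ k : ℕ)), b k) *
           ∏ k ∈ univ.filter
              (fun k => Nplus ≤ (ρ k : ℕ) ∧ (ρ k : ℕ) ≤ N - 1 - Nminus),
              (b k / a k) ^ (b k)) ^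
          (-(1 / ∑ k ∈ univ.filter
              (fun k => Nplus ≤ (ρ k : ℕ) ∧ (ρ k : ℕ) ≤ N - 1 - Nminus), b k)) ∧
        0 < lam ∧
        ∃ δstar : Fin N → ℝ,
          (∀ k, (ρ k : ℕ) < Nplus → δstar k = M * δbar) ∧
          (∀ k, Nplus ≤ (ρ k : ℕ) → (ρ k : ℕ) ≤ N - 1 - Nminus →
            δstar k = lam * (b k / a k)) ∧
          (∀ k, N - 1 - Nminus < (ρ k : ℕ) → δstar k = m * δbar) ∧
          -- δstar is an optimal solution of the master problem
          (∀ k, m * δbar ≤ δstar k ∧ δstar k ≤ M * δbar) ∧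
          (∑ k, b k * (-Real.log (δstar k)) = (∑ k, b k) * (-Real.log δbar)) ∧
          (∀ δ : Fin N → ℝ,
            (∀ k, m * δbar ≤ δ k ∧ δ k ≤ M * δbar) →
            (∑ k, b k * (-Real.log (δ k)) = (∑ k, b k) * (-Real.log δbar)) →
            ∑ k, a k * δstar k ≤ ∑ k, a k * δ k) :=
  closed_form_log_schedule_cutoff_general N δbar m M hδbar hm hm1 hM a b ha hb hnondeg
end

section
/- Budget saturation in the relaxed master problem. Let N ∈ ℕ, δ̄ > 0, 0 ≤ m < 1 < M, let a, b ∈ ℝ^N have strictly positive entries, let h : [m·δ̄, M·δ̄] → ℝ be continuous and strictly decreasing, and let B̄ be a real number with B̄ < (∑_{k=0}^{N−1} b_k)·h(m·δ̄). If δ* minimizes ∑_{k=0}^{N−1} a_k δ_k over all δ ∈ ℝ^N with m·δ̄ ≤ δ_k ≤ M·δ̄ for every k and ∑_{k=0}^{N−1} b_k h(δ_k) ≤ B̄, then the budget constraint is active at δ*: ∑_{k=0}^{N−1} b_k h(δ*_k) = B̄. -/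
/-- Budget saturation in the relaxed master problem. -/
theorem budget_saturation_relaxed
    (N : ℕ) (δbar m M : ℝ)
    (hδbar : 0 < δbar) (hm : 0 ≤ m) (hm1 : m < 1) (hM : 1 < M)
    (a b : Fin N → ℝ) (ha : ∀ k, 0 < a k) (hb : ∀ k, 0 < b k)
    (h : ℝ → ℝ)
    (h_cont : ContinuousOn h (Set.Icc (m * δbar) (M * δbar)))
    (h_anti : StrictAntiOn h (Set.Icc (m * δbar) (M * δbar)))
    (Bbar : ℝ) (hB : Bbar < (∑ k, b k) * h (m * δbar))
    (δs : Fin N → ℝ)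
    (hfeas : ∀ k, δs k ∈ Set.Icc (m * δbar) (M * δbar))
    (hbudget : ∑ k, b k * h (δs k) ≤ Bbar)
    (hopt : ∀ δ : Fin N → ℝ, (∀ k, δ k ∈ Set.Icc (m * δbar) (M * δbar)) →
      (∑ k, b k * h (δ k) ≤ Bbar) →
      ∑ k, a k * δs k ≤ ∑ k, a k * δ k) :
    ∑ k, b k * h (δs k) = Bbar := by
  by_contra hne
  have hS : ∑ k, b k * h (δs k) < Bbar := lt_of_le_of_ne hbudget hne
  -- there exists an index with δs k0 > m*δbar
  have hk0 : ∃ k0, m * δbar < δs k0 := by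
    by_contra hall
    push_neg at hall
    have heq : ∀ k, δs k = m * δbar := fun k => le_antisymm (hall k) (hfeas k).1
    have : ∑ k, b k * h (δs k) = (∑ k, b k) * h (m * δbar) := by
      rw [Finset.sum_mul]
      exact Finset.sum_congr rfl (fun k _ => by rw [heq k])
    linarith
  obtain ⟨k0, hk0⟩ := hk0
  set x0 := δs k0 with hx0def
  have hx0mem : x0 ∈ Set.Icc (m * δbar) (M * δbar) := hfeas k0
  have hbk0 : 0 < b k0 := hb k0
  set η : ℝ := (Bbar - ∑ k, b k * h (δs k)) / b k0 with hηdef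
  have hη : 0 < η := div_pos (by linarith) hbk0
  have hcw : ContinuousWithinAt h (Set.Icc (m * δbar) (M * δbar)) x0 := h_cont x0 hx0mem
  rw [Metric.continuousWithinAt_iff] at hcw
  obtain ⟨d, hd, hdd⟩ := hcw η hη
  set ε : ℝ := min (d / 2) (x0 - m * δbar) with hεdef
  have hε : 0 < ε := lt_min (by linarith) (by linarith)
  have hεd : ε < d := lt_of_le_of_lt (min_le_left _ _) (by linarith)
  have hlow : m * δbar ≤ x0 - ε := by
    have := min_le_right (d / 2) (x0 - m * δbar)
    simp only [← hεdef] at this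
    linarith
  have hhigh : x0 - ε ≤ M * δbar := by
    have := hx0mem.2
    linarith
  have hmem' : x0 - ε ∈ Set.Icc (m * δbar) (M * δbar) := ⟨hlow, hhigh⟩
  have hdist : dist (x0 - ε) x0 < d := by
    rw [Real.dist_eq]
    rw [abs_of_nonpos (by linarith)]
    linarith
  have hhb := hdd hmem' hdist
  rw [Real.dist_eq] at hhb
  have hdiff : h (x0 - ε) - h x0 < η := lt_of_le_of_lt (le_abs_self _) hhb
  -- define the perturbed point
  set δ' : Fin N → ℝ := Function.update δs k0 (x0 - ε) with hδ'def
  have hfeas' : ∀ k, δ' k ∈ Set.Icc (m * δbar) (M * δbar) := by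
    intro k
    by_cases hk : k = k0
    · subst hk; simp [hδ'def, hmem']
    · simp [hδ'def, Function.update_of_ne hk]; exact hfeas k
  -- sum decompositions
  have hsum1 : ∑ k, b k * h (δ' k) =
      b k0 * h (x0 - ε) + ∑ k ∈ Finset.univ.erase k0, b k * h (δs k) := by
    rw [← Finset.add_sum_erase _ (fun k => b k * h (δ' k)) (Finset.mem_univ k0)]
    congr 1
    · simp [hδ'def]
    · exact Finset.sum_congr rfl (fun k hk => by
        rw [hδ'def, Function.update_of_ne (Finset.ne_of_mem_erase hk)])
  have hsum2 : ∑ k, b k * h (δs k) =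
      b k0 * h x0 + ∑ k ∈ Finset.univ.erase k0, b k * h (δs k) := by
    rw [← Finset.add_sum_erase _ (fun k => b k * h (δs k)) (Finset.mem_univ k0)]
  have hbudget' : ∑ k, b k * h (δ' k) ≤ Bbar := by
    have h1 : b k0 * (h (x0 - ε) - h x0) < b k0 * η := by
      exact mul_lt_mul_of_pos_left hdiff hbk0
    have h2 : b k0 * η = Bbar - ∑ k, b k * h (δs k) := by
      rw [hηdef]; field_simp
    nlinarith [hsum1, hsum2]
  have hobj : ∑ k, a k * δ' k < ∑ k, a k * δs k := by
    have ha1 : ∑ k, a k * δ' k =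
        a k0 * (x0 - ε) + ∑ k ∈ Finset.univ.erase k0, a k * δs k := by
      rw [← Finset.add_sum_erase _ (fun k => a k * δ' k) (Finset.mem_univ k0)]
      congr 1
      · simp [hδ'def]
      · exact Finset.sum_congr rfl (fun k hk => by
          rw [hδ'def, Function.update_of_ne (Finset.ne_of_mem_erase hk)])
    have ha2 : ∑ k, a k * δs k =
        a k0 * x0 + ∑ k ∈ Finset.univ.erase k0, a k * δs k := by
      rw [← Finset.add_sum_erase _ (fun k => a k * δs k) (Finset.mem_univ k0)]
    have := ha k0
    nlinarith
  have := hopt δ' hfeas' hbudget'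
  linarith
end

section
/- Recursion rule between interior entries of an optimal work allocation (equation (3.16)). Let N ∈ ℕ, r > 0, let a, b ∈ ℝ^N have strictly positive entries, and let 0 < ω_M < ω̄/N < ω_m. Consider the problem: minimize ∑_{k=0}^{N−1} a_k·(ω_k/b_k)^{−1/r} over vectors ω with ω_M ≤ ω_k ≤ ω_m for every k, subject to ∑_{k=0}^{N−1} ω_k = ω̄. If ω* is an optimal solution and two indices k, k̂ ∈ {0,…,N−1} satisfy ω_M < ω*_k < ω_m and ω_M < ω*_{k̂} < ω_m, then ω*_{k̂} = ( (b_{k̂}·a_{k̂}^r) / (b_k·a_k^r) )^{1/(r+1)} · ω*_k. -/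
/-!
Moving work `t` from entry `k̂` to entry `k` keeps an allocation feasible for small `|t|`, because
both entries are interior, so `t = 0` is a local minimum of the objective along this transfer.
Hence the marginal costs agree: `a_k b_k^{1/r} ω_k^{-(r+1)/r} = a_k̂ b_k̂^{1/r} ω_k̂^{-(r+1)/r}`,
and solving for `ω_k̂` gives the recursion rule.
-/
open Function Set Filter Topology Real

section Transfer

variable {ι : Type*} [Fintype ι] [DecidableEq ι]

lemma Fintype.sum_update (f : ι → ℝ) (i : ι) (c : ℝ) :
    ∑ k, update f i c k = ∑ k, f k + (c - f i) := by
  rw [Finset.sum_update_of_mem (Finset.mem_univ i), ← Finset.add_sum_erase _ f (Finset.mem_univ i),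
    Finset.sdiff_singleton_eq_erase]
  ring

lemma sum_apply_update_update (g : ι → ℝ → ℝ) (ω : ι → ℝ) {i j : ι} (hij : i ≠ j) (u v : ℝ) :
    ∑ k, g k (update (update ω i u) j v k) =
      ∑ k, g k (ω k) + (g i u - g i (ω i)) + (g j v - g j (ω j)) := by
  simp only [apply_update g, Fintype.sum_update, update_of_ne hij.symm]

lemma eq_of_hasDerivAt_of_optimal_allocation {f : ι → ℝ → ℝ} {lo up B : ℝ} {ω : ι → ℝ}
    (hfeas : ∀ k, ω k ∈ Icc lo up) (hbudget : ∑ k, ω k = B)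
    (hopt : ∀ ν : ι → ℝ, (∀ k, ν k ∈ Icc lo up) → ∑ k, ν k = B →
      ∑ k, f k (ω k) ≤ ∑ k, f k (ν k))
    {i j : ι} (hij : i ≠ j) (hi : ω i ∈ Ioo lo up) (hj : ω j ∈ Ioo lo up)
    {di dj : ℝ} (hdi : HasDerivAt (f i) di (ω i)) (hdj : HasDerivAt (f j) dj (ω j)) :
    di = dj := by
  set φ : ℝ → ℝ := fun t ↦ f i (ω i + t) + f j (ω j - t)
  have hφ : HasDerivAt φ (di + -dj) 0 :=
    (HasDerivAt.comp_const_add _ _ (by rwa [add_zero])).add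
      (HasDerivAt.comp_const_sub _ _ (by rwa [sub_zero]))
  have hmin : IsLocalMin φ 0 := by
    have hi' : ∀ᶠ t in 𝓝 0, ω i + t ∈ Ioo lo up :=
      (continuous_const_add (ω i)).continuousAt.preimage_mem_nhds
        (by simpa using isOpen_Ioo.mem_nhds hi)
    have hj' : ∀ᶠ t in 𝓝 0, ω j - t ∈ Ioo lo up :=
      (continuous_sub_left (ω j)).continuousAt.preimage_mem_nhds
        (by simpa using isOpen_Ioo.mem_nhds hj)
    filter_upwards [hi', hj'] with t hti htj
    have hν : ∀ k, update (update ω i (ω i + t)) j (ω j - t) k ∈ Icc lo up := by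
      intro k
      simp only [update_apply]
      split_ifs
      exacts [Ioo_subset_Icc_self htj, Ioo_subset_Icc_self hti, hfeas k]
    have hsum := sum_apply_update_update (fun _ w ↦ w) ω hij (ω i + t) (ω j - t)
    have := hopt _ hν (by rw [hsum, hbudget]; ring)
    rw [sum_apply_update_update f ω hij] at this
    simp only [φ, add_zero, sub_zero]
    linarith
  linarith [hmin.hasDerivAt_eq_zero hφ]

end Transfer

lemma hasDerivAt_mul_div_rpow (a : ℝ) {b p x : ℝ} (hx : x / b ≠ 0) :
    HasDerivAt (fun w ↦ a * (w / b) ^ p) (a * (1 / b * p * (x / b) ^ (p - 1))) x :=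
  (((hasDerivAt_id x).div_const b).rpow_const (Or.inl hx)).const_mul a

lemma eq_rpow_mul_of_marginal_eq {r a a' b b' x y : ℝ} (hr : 0 < r) (ha : 0 < a) (ha' : 0 < a')
    (hb : 0 < b) (hb' : 0 < b') (hx : 0 < x) (hy : 0 < y)
    (h : a * (1 / b * -(1 / r) * (x / b) ^ (-(1 / r) - 1)) =
      a' * (1 / b' * -(1 / r) * (y / b') ^ (-(1 / r) - 1))) :
    y = ((b' * a' ^ r) / (b * a ^ r)) ^ (1 / (r + 1)) * x := by
  have h' : a / b * (x / b) ^ (-(1 / r) - 1) = a' / b' * (y / b') ^ (-(1 / r) - 1) := by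
    have hr' : -(1 / r) ≠ 0 := by simp [hr.ne']
    refine mul_left_cancel₀ hr' ?_
    linear_combination h
  -- in logarithms the first-order condition is linear
  apply log_injOn_pos (mem_Ioi.2 hy) (mem_Ioi.2 (by positivity))
  have hlog := congrArg log h'
  simp (disch := positivity) only [log_mul, log_div, log_rpow] at hlog ⊢
  field_simp at hlog ⊢
  linear_combination hlog

theorem recursion_rule_optimal_work_general
    (N : ℕ) (r ωM ωm ωbar : ℝ) (hr : 0 < r)
    (a b : Fin N → ℝ) (ha : ∀ k, 0 < a k) (hb : ∀ k, 0 < b k)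
    (hωM : 0 < ωM)
    (ωs : Fin N → ℝ)
    (hfeas : ∀ k, ωM ≤ ωs k ∧ ωs k ≤ ωm)
    (hbudget : ∑ k, ωs k = ωbar)
    (hopt : ∀ ω : Fin N → ℝ,
      (∀ k, ωM ≤ ω k ∧ ω k ≤ ωm) →
      (∑ k, ω k = ωbar) →
      ∑ k, a k * (ωs k / b k) ^ (-(1 / r)) ≤
        ∑ k, a k * (ω k / b k) ^ (-(1 / r)))
    (k khat : Fin N)
    (hk : ωs k ∈ Set.Ioo ωM ωm)
    (hkhat : ωs khat ∈ Set.Ioo ωM ωm) :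
    ωs khat = ((b khat * a khat ^ r) / (b k * a k ^ r)) ^ (1 / (r + 1)) * ωs k := by
  obtain rfl | hne := eq_or_ne k khat
  · rw [div_self (mul_pos (hb k) (rpow_pos_of_pos (ha k) r)).ne', one_rpow, one_mul]
  have hpos {j} (hj : ωs j ∈ Ioo ωM ωm) : 0 < ωs j := hωM.trans hj.1
  have hderiv {j} (hj : ωs j ∈ Ioo ωM ωm) := hasDerivAt_mul_div_rpow (a j) (p := -(1 / r))
    (div_pos (hpos hj) (hb j)).ne'
  exact eq_rpow_mul_of_marginal_eq hr (ha k) (ha khat) (hb k) (hb khat) (hpos hk) (hpos hkhat)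
    (eq_of_hasDerivAt_of_optimal_allocation (f := fun j w ↦ a j * (w / b j) ^ (-(1 / r)))
      hfeas hbudget hopt hne hk hkhat (hderiv hk) (hderiv hkhat))

/-- Recursion rule between interior entries of an optimal work allocation
(equation (3.16)). -/
theorem recursion_rule_optimal_work
    (N : ℕ) (r ωM ωm ωbar : ℝ) (hr : 0 < r)
    (a b : Fin N → ℝ) (ha : ∀ k, 0 < a k) (hb : ∀ k, 0 < b k)
    (hωM : 0 < ωM) (h1 : ωM < ωbar / N) (h2 : ωbar / N < ωm)
    (ωs : Fin N → ℝ)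
    (hfeas : ∀ k, ωM ≤ ωs k ∧ ωs k ≤ ωm)
    (hbudget : ∑ k, ωs k = ωbar)
    (hopt : ∀ ω : Fin N → ℝ,
      (∀ k, ωM ≤ ω k ∧ ω k ≤ ωm) →
      (∑ k, ω k = ωbar) →
      ∑ k, a k * (ωs k / b k) ^ (-(1 / r)) ≤
        ∑ k, a k * (ω k / b k) ^ (-(1 / r)))
    (k khat : Fin N)
    (hk : ωs k ∈ Set.Ioo ωM ωm)
    (hkhat : ωs khat ∈ Set.Ioo ωM ωm) :
    ωs khat = ((b khat * a khat ^ r) / (b k * a k ^ r)) ^ (1 / (r + 1)) * ωs k :=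
  recursion_rule_optimal_work_general N r ωM ωm ωbar hr a b ha hb hωM ωs hfeas hbudget hopt k khat
    hk hkhat
end
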